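/- arXiv:1508.02335 — 7 statements merged into one kernel-verified Lean document; each statement's English description precedes it below -/
import Mathlib

section
/- Let Σ be a countable alphabet. There exists a factor map π : Deficient(Σ^ℤ) → ℕ^ℤ whose image is contained in Deficient(ℕ^ℤ), such that H̃(π(x)) < 2 for every x ∈ Deficient(Σ^ℤ), and such that π maps regular points to regular points. -/
open Filter
open scoped Classical ENNReal

/-- The shift on `Λ^ℤ`. -/
def shift {Λ : Type*} (x : ℤ → Λ) : ℤ → Λ := fun i => x (i + 1)

/-- The word `a` occurs in `x ∈ Λ^ℤ` at position `i`. -/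
def OccursAt {Λ : Type*} (x : ℤ → Λ) (a : List Λ) (i : ℤ) : Prop :=
  ∀ j : Fin a.length, x (i + ((j : ℕ) : ℤ)) = a.get j

/-- `(1/N) · #{0 ≤ i < N : a occurs in x at i}`. -/
noncomputable def wordFreq {Λ : Type*} (x : ℤ → Λ) (a : List Λ) (N : ℕ) : ℝ :=
  (∑ i ∈ Finset.range N, if OccursAt x a (i : ℤ) then (1 : ℝ) else 0) / N

/-- A point `x ∈ Λ^ℤ` is regular if the frequency `s(x,a)` exists for every finite word. -/
def Regular {Λ : Type*} (x : ℤ → Λ) : Prop :=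
  ∀ a : List Λ, ∃ L : ℝ, Tendsto (wordFreq x a) atTop (nhds L)

/-- The frequency `s(x,a)` of the symbol `a` in `x` (the limit of the finite window
frequencies, when it exists). -/
noncomputable def symFreq {Λ : Type*} (x : ℤ → Λ) (a : Λ) : ℝ :=
  limUnder atTop (wordFreq x [a])

/-- The set of deficient points of `Λ^ℤ`: points `x` such that `s(x,a)` exists and is
positive for every symbol `a ∈ Λ`, and `ρ(x) = ∑_{a∈Λ} s(x,a) < 1`. -/
def DeficientSet (Λ : Type*) : Set (ℤ → Λ) :=
  {x | (∀ a : Λ, ∃ L : ℝ, 0 < L ∧ Tendsto (wordFreq x [a]) atTop (nhds L)) ∧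
    ∃ c : ℝ, HasSum (fun a : Λ => symFreq x a) c ∧ c < 1}

/-- `ρ(x) = ∑_{a∈Λ} s(x,a)`. -/
noncomputable def rho {Λ : Type*} (x : ℤ → Λ) : ℝ :=
  ∑' a : Λ, symFreq x a

/-- `H̃(x) = −(1−ρ(x))·log₂(1−ρ(x)) − ∑_{a∈Λ} s(x,a)·log₂ s(x,a)` (valued in `[0,∞]`,
with the convention `0·log₂ 0 = 0`). -/
noncomputable def Htilde {Λ : Type*} (x : ℤ → Λ) : ℝ≥0∞ :=
  ENNReal.ofReal (-((1 - rho x) * Real.logb 2 (1 - rho x))) +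
    ∑' a : Λ, ENNReal.ofReal (-(symFreq x a * Real.logb 2 (symFreq x a)))

/-!
Enumerate the infinite alphabet as `e : Λ ≃ ℕ` and cut `ℕ` into consecutive finite blocks, block
`k ≥ 1` starting only once the total frequency of all later symbols has dropped below
`16⁻¹ ^ (k + 1)`. Sending every symbol to the index of its block is a letter-to-letter code with
finite nonempty fibres, so it maps deficient points to deficient points and regular points to
regular points, and in the image the symbol `k ≥ 1` has frequency below `16⁻¹ ^ (k + 1)`. As
`-t log₂ t ≤ 3/4` and `-t log₂ t ≤ 3 √t`, the entropy of the image is at most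
`3/4 + 3/4 + ∑ₖ 3 · 4⁻⁽ᵏ⁺¹⁾ < 2`.

The blocks are computed from the symbol frequencies of `x`, which the shift does not change, so
the map commutes with the shift; reading the frequencies off `limsup`s of window frequencies makes
it measurable. Over a finite alphabet there are no deficient points: the frequencies sum to `1`.
-/

open Finset Topology

section Frequencies

variable {Λ Γ : Type*}

lemma occursAt_singleton (x : ℤ → Λ) (a : Λ) (i : ℤ) : OccursAt x [a] i ↔ x i = a := by
  simp [OccursAt]

lemma occursAt_ofFn {n : ℕ} (x : ℤ → Λ) (u : Fin n → Λ) (i : ℤ) :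
    OccursAt x (List.ofFn u) i ↔ (fun j : Fin n => x (i + (j : ℕ))) = u := by
  simp [OccursAt, Fin.forall_iff, funext_iff]

lemma occursAt_shift (x : ℤ → Λ) (w : List Λ) (i : ℤ) :
    OccursAt (shift x) w i ↔ OccursAt x w (i + 1) := by
  simp only [OccursAt, shift, add_right_comm]

lemma wordFreq_eq_sum_wordFreq {ι : Type*} {x : ℤ → Λ} {w : List Λ} {y : ℤ → Γ} (S : Finset ι)
    (v : ι → List Γ)
    (h : ∀ i : ℤ, (if OccursAt x w i then (1 : ℝ) else 0) =
      ∑ u ∈ S, if OccursAt y (v u) i then 1 else 0) (N : ℕ) :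
    wordFreq x w N = ∑ u ∈ S, wordFreq y (v u) N := by
  simp only [wordFreq, h, ← Finset.sum_div]
  rw [Finset.sum_comm]

lemma tendsto_wordFreq_shift {x : ℤ → Λ} {w : List Λ} {L : ℝ}
    (h : Tendsto (wordFreq x w) atTop (𝓝 L)) : Tendsto (wordFreq (shift x) w) atTop (𝓝 L) := by
  set v : ℕ → ℝ := fun i => if OccursAt x w i then 1 else 0
  have hv : ∀ i, 0 ≤ v i ∧ v i ≤ 1 := fun i => by by_cases hocc : OccursAt x w i <;> simp [v, hocc]
  have hshift : ∀ N : ℕ, wordFreq (shift x) w N = wordFreq x w N + (v N - v 0) / N := by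
    intro N
    have hsum := (Finset.sum_range_succ' v N).symm.trans (Finset.sum_range_succ v N)
    simp only [wordFreq, occursAt_shift, v] at hsum ⊢
    push_cast at hsum ⊢
    rw [← add_div]
    congr 1
    linarith
  have herr : Tendsto (fun N : ℕ => (v N - v 0) / N) atTop (𝓝 0) := by
    refine squeeze_zero_norm (fun N => ?_) tendsto_one_div_atTop_nhds_zero_nat
    rw [norm_div, Real.norm_natCast]
    exact div_le_div_of_nonneg_right (abs_sub_le_of_nonneg_of_le (hv N).1 (hv N).2
      (hv 0).1 (hv 0).2) (Nat.cast_nonneg N)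
  rw [funext hshift]
  simpa using h.add herr

lemma tendsto_wordFreq_symFreq {x : ℤ → Λ} (hx : x ∈ DeficientSet Λ) (a : Λ) :
    Tendsto (wordFreq x [a]) atTop (𝓝 (symFreq x a)) := by
  obtain ⟨L, -, hL⟩ := hx.1 a
  rwa [symFreq, hL.limUnder_eq]

lemma symFreq_pos {x : ℤ → Λ} (hx : x ∈ DeficientSet Λ) (a : Λ) : 0 < symFreq x a := by
  obtain ⟨L, hL0, hL⟩ := hx.1 a
  rwa [symFreq, hL.limUnder_eq]

section LetterCode

variable {φ : Λ → Γ} {F : Γ → Finset Λ}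

lemma wordFreq_comp_singleton (hF : ∀ a k, a ∈ F k ↔ φ a = k) (x : ℤ → Λ) (k : Γ) (N : ℕ) :
    wordFreq (φ ∘ x) [k] N = ∑ a ∈ F k, wordFreq x [a] N :=
  wordFreq_eq_sum_wordFreq _ _ (fun i => by simp [occursAt_singleton, ← hF]) N

lemma wordFreq_comp (hF : ∀ a k, a ∈ F k ↔ φ a = k) (x : ℤ → Λ) (w : List Γ) (N : ℕ) :
    wordFreq (φ ∘ x) w N =
      ∑ u ∈ Fintype.piFinset (fun j => F (w.get j)), wordFreq x (List.ofFn u) N := by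
  refine wordFreq_eq_sum_wordFreq _ _ (fun i => ?_) N
  simp only [occursAt_ofFn, Finset.sum_ite_eq, Fintype.mem_piFinset, hF]
  exact if_congr Iff.rfl rfl rfl

lemma Regular.comp (hF : ∀ a k, a ∈ F k ↔ φ a = k) {x : ℤ → Λ} (hx : Regular x) :
    Regular (φ ∘ x) := fun w => by
  choose L hL using hx
  refine ⟨∑ u ∈ Fintype.piFinset (fun j => F (w.get j)), L (List.ofFn u), ?_⟩
  rw [funext (wordFreq_comp hF x w)]
  exact tendsto_finsetSum _ fun u _ => hL (List.ofFn u)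

lemma HasSum.sum_finset_fiberwise {α : Type*} [AddCommGroup α] [UniformSpace α]
    [IsUniformAddGroup α] [CompleteSpace α] [T2Space α] {f : Λ → α} {c : α} (hf : HasSum f c)
    (hF : ∀ a k, a ∈ F k ↔ φ a = k) : HasSum (fun k => ∑ a ∈ F k, f a) c := by
  have hfib : ∀ k, φ ⁻¹' {k} = ↑(F k) := fun k => by ext; simp [hF]
  refine (hf.tsum_fiberwise φ).congr_fun fun k => ?_
  rw [tsum_congr_set_coe f (hfib k), Finset.tsum_subtype']

lemma tendsto_wordFreq_comp_singleton (hF : ∀ a k, a ∈ F k ↔ φ a = k) {x : ℤ → Λ}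
    (hx : x ∈ DeficientSet Λ) (k : Γ) :
    Tendsto (wordFreq (φ ∘ x) [k]) atTop (𝓝 (∑ a ∈ F k, symFreq x a)) := by
  rw [funext (wordFreq_comp_singleton hF x k)]
  exact tendsto_finsetSum _ fun a _ => tendsto_wordFreq_symFreq hx a

lemma symFreq_comp (hF : ∀ a k, a ∈ F k ↔ φ a = k) {x : ℤ → Λ} (hx : x ∈ DeficientSet Λ)
    (k : Γ) :
    symFreq (φ ∘ x) k = ∑ a ∈ F k, symFreq x a :=
  (tendsto_wordFreq_comp_singleton hF hx k).limUnder_eq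

lemma comp_mem_deficientSet (hF : ∀ a k, a ∈ F k ↔ φ a = k) (hne : ∀ k, (F k).Nonempty)
    {x : ℤ → Λ} (hx : x ∈ DeficientSet Λ) : φ ∘ x ∈ DeficientSet Γ := by
  obtain ⟨c, hc, hc1⟩ := hx.2
  refine ⟨fun k => ⟨_, sum_pos (fun a _ => symFreq_pos hx a) (hne k),
    tendsto_wordFreq_comp_singleton hF hx k⟩, c, ?_, hc1⟩
  simpa only [symFreq_comp hF hx] using hc.sum_finset_fiberwise hF

end LetterCode

lemma deficientSet_eq_empty_of_finite [Finite Λ] : DeficientSet Λ = ∅ := by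
  cases nonempty_fintype Λ
  refine Set.eq_empty_of_forall_notMem fun x hx => ?_
  obtain ⟨c, hc, hc1⟩ := hx.2
  -- collapse the alphabet to a single letter, whose frequency is `1`
  have hlim := tendsto_wordFreq_comp_singleton (φ := fun _ => ()) (F := fun _ => univ)
    (by simp) hx ()
  have hone : Tendsto (wordFreq ((fun _ => ()) ∘ x) [()]) atTop (𝓝 1) := by
    refine tendsto_const_nhds.congr' ?_
    filter_upwards [eventually_ge_atTop 1] with N hN
    have : (N : ℝ) ≠ 0 := by positivity
    simp [wordFreq, OccursAt, this]
  have hsum : ∑ a, symFreq x a = c := (hasSum_fintype _).unique hc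
  linarith [tendsto_nhds_unique hlim hone]

end Frequencies

section Blocks

variable (p : ℕ → ℝ≥0∞)

noncomputable def tailMass (n : ℕ) : ℝ≥0∞ := ∑' i, p (i + n)

noncomputable def blockThreshold (k : ℕ) : ℝ≥0∞ := ENNReal.ofReal ((1 / 16) ^ (k + 1))

-- The index of the block containing `m`, where block `k ≥ 1` starts at the least `m ≥ k` with
-- `tailMass p (m - k) < blockThreshold k`; so block `k ≥ 1` carries mass below `16⁻¹ ^ (k + 1)`.
noncomputable def blockIndex (m : ℕ) : ℕ :=
  #{k ∈ Icc 1 m | tailMass p (m - k) < blockThreshold k}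

noncomputable def blockStart (k : ℕ) : ℕ := sInf {m | k ≤ blockIndex p m}

noncomputable def block (k : ℕ) : Finset ℕ := Ico (blockStart p k) (blockStart p (k + 1))

variable {p}

lemma tailMass_antitone : Antitone (tailMass p) := fun n n' h => by
  obtain ⟨d, rfl⟩ := Nat.exists_eq_add_of_le h
  simpa only [tailMass, add_assoc, add_comm d] using
    ENNReal.tsum_comp_le_tsum_of_injective (add_left_injective d) (fun i => p (i + n))

lemma blockThreshold_antitone : Antitone blockThreshold := fun _ _ h =>
  ENNReal.ofReal_le_ofReal (pow_le_pow_of_le_one (by norm_num) (by norm_num) (by omega))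

lemma le_blockIndex_iff {k m : ℕ} (hk : 1 ≤ k) :
    k ≤ blockIndex p m ↔ k ≤ m ∧ tailMass p (m - k) < blockThreshold k := by
  constructor
  · intro h
    by_contra hfail
    have hsub : {j ∈ Icc 1 m | tailMass p (m - j) < blockThreshold j} ⊆ Icc 1 (k - 1) := by
      intro j hj
      simp only [mem_filter, mem_Icc] at hj ⊢
      refine ⟨hj.1.1, Nat.le_sub_one_of_lt (lt_of_not_ge fun hkj => hfail ⟨by omega, ?_⟩)⟩
      calc tailMass p (m - k) ≤ tailMass p (m - j) := tailMass_antitone (by omega)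
        _ < blockThreshold j := hj.2
        _ ≤ blockThreshold k := blockThreshold_antitone hkj
    have := card_le_card hsub
    simp only [Nat.card_Icc] at this
    unfold blockIndex at h
    omega
  · rintro ⟨hkm, htail⟩
    have hsub : Icc 1 k ⊆ {j ∈ Icc 1 m | tailMass p (m - j) < blockThreshold j} := by
      intro j hj
      simp only [mem_filter, mem_Icc] at hj ⊢
      refine ⟨⟨hj.1, hj.2.trans hkm⟩, ?_⟩
      calc tailMass p (m - j) ≤ tailMass p (m - k) := tailMass_antitone (by omega)
        _ < blockThreshold k := htail
        _ ≤ blockThreshold j := blockThreshold_antitone hj.2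
    simpa [blockIndex] using card_le_card hsub

lemma blockIndex_zero : blockIndex p 0 = 0 := by simp [blockIndex]

lemma blockIndex_mono : Monotone (blockIndex p) := fun m m' h => by
  rcases Nat.eq_zero_or_pos (blockIndex p m) with h0 | hpos
  · simp [h0]
  obtain ⟨hkm, htail⟩ := (le_blockIndex_iff hpos).1 le_rfl
  exact (le_blockIndex_iff hpos).2
    ⟨hkm.trans h, (tailMass_antitone (Nat.sub_le_sub_right h _)).trans_lt htail⟩

lemma blockIndex_succ_le (m : ℕ) : blockIndex p (m + 1) ≤ blockIndex p m + 1 := by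
  set K := blockIndex p (m + 1)
  rcases Nat.lt_or_ge K 2 with hK | hK
  · omega
  obtain ⟨hKm, htail⟩ := (le_blockIndex_iff (p := p) (m := m + 1) (by omega)).1 le_rfl
  suffices K - 1 ≤ blockIndex p m by omega
  refine (le_blockIndex_iff (by omega)).2 ⟨by omega, ?_⟩
  calc tailMass p (m - (K - 1)) = tailMass p (m + 1 - K) := by congr 1; omega
    _ < blockThreshold K := htail
    _ ≤ blockThreshold (K - 1) := blockThreshold_antitone (by omega)

lemma exists_le_blockIndex (hp : ∑' m, p m ≠ ∞) (k : ℕ) : ∃ m, k ≤ blockIndex p m := by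
  rcases Nat.eq_zero_or_pos k with rfl | hk
  · exact ⟨0, le_rfl⟩
  have hpos : 0 < blockThreshold k := ENNReal.ofReal_pos.2 (by positivity)
  obtain ⟨N, hN⟩ := ((ENNReal.tendsto_sum_nat_add p hp).eventually_lt_const hpos).exists
  exact ⟨N + k, (le_blockIndex_iff hk).2 ⟨le_add_self, by simpa [tailMass] using hN⟩⟩

lemma blockStart_le_iff (hp : ∑' m, p m ≠ ∞) {k m : ℕ} :
    blockStart p k ≤ m ↔ k ≤ blockIndex p m :=
  ⟨fun h => le_trans (Nat.sInf_mem (s := {m | k ≤ blockIndex p m}) (exists_le_blockIndex hp k))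
    (blockIndex_mono h), fun h => Nat.sInf_le h⟩

lemma mem_block_iff (hp : ∑' m, p m ≠ ∞) {k m : ℕ} : m ∈ block p k ↔ blockIndex p m = k := by
  rw [block, mem_Ico, blockStart_le_iff hp, ← not_le, blockStart_le_iff hp]
  omega

lemma blockStart_mem_block (hp : ∑' m, p m ≠ ∞) (k : ℕ) : blockStart p k ∈ block p k := by
  rw [mem_block_iff hp]
  refine le_antisymm ?_ ((blockStart_le_iff hp).1 le_rfl)
  rcases h : blockStart p k with _ | m
  · simp [blockIndex_zero]
  · have hm : blockIndex p m < k := by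
      rw [← not_le, ← blockStart_le_iff hp, h]
      omega
    exact (blockIndex_succ_le m).trans hm

lemma sum_block_succ_lt (hp : ∑' m, p m ≠ ∞) (k : ℕ) :
    ∑ m ∈ block p (k + 1), p m < blockThreshold (k + 1) := by
  set s := blockStart p (k + 1)
  obtain ⟨-, htail⟩ := (le_blockIndex_iff le_add_self).1 ((blockStart_le_iff hp).1 le_rfl)
  calc ∑ m ∈ block p (k + 1), p m = ∑ i ∈ range (blockStart p (k + 2) - s), p (i + s) := by
        rw [block, sum_Ico_eq_sum_range]
        exact sum_congr rfl fun i _ => by rw [add_comm]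
    _ ≤ tailMass p s := ENNReal.sum_le_tsum _
    _ ≤ tailMass p (s - (k + 1)) := tailMass_antitone (Nat.sub_le _ _)
    _ < blockThreshold (k + 1) := htail

end Blocks

section Entropy

open Real

lemma negMulLog_le_half {t : ℝ} (ht : 0 ≤ t) : negMulLog t ≤ 1 / 2 := by
  rcases ht.eq_or_lt with rfl | ht
  · norm_num
  have hlog := log_le_sub_one_of_pos (show 0 < (2 * t)⁻¹ by positivity)
  rw [log_inv, log_mul two_ne_zero ht.ne'] at hlog
  have hinv : t * (2 * t)⁻¹ = 1 / 2 := by field_simp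
  have := mul_le_mul_of_nonneg_left hlog ht.le
  rw [mul_sub, hinv] at this
  rw [negMulLog]
  nlinarith [log_two_lt_d9]

lemma negMulLog_le_two_mul_sqrt {t : ℝ} (ht : 0 ≤ t) : negMulLog t ≤ 2 * √t := by
  rcases ht.eq_or_lt with rfl | ht
  · norm_num
  have hs : 0 < √t := sqrt_pos.2 ht
  have hlog := log_le_sub_one_of_pos (inv_pos.2 hs)
  rw [log_inv, log_sqrt ht.le] at hlog
  have := mul_le_mul_of_nonneg_left hlog ht.le
  rw [mul_sub, ← div_eq_mul_inv, div_sqrt] at this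
  rw [negMulLog]
  nlinarith

lemma neg_mul_logb_two_eq (t : ℝ) : -(t * logb 2 t) = negMulLog t / log 2 := by
  rw [negMulLog, logb]
  ring

lemma ofReal_neg_mul_logb_add_tsum_lt_two {t : ℕ → ℝ} (ht : ∀ k, 0 ≤ t k)
    (hdecay : ∀ k, t (k + 1) ≤ (1 / 16) ^ (k + 2)) {u : ℝ} (hu : 0 ≤ u) :
    ENNReal.ofReal (-(u * logb 2 u)) + ∑' k, ENNReal.ofReal (-(t k * logb 2 (t k))) < 2 := by
  have hlog2 : 2 / 3 < log 2 := by linarith [log_two_gt_d9]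
  have hsmall : ∀ s, 0 ≤ s → -(s * logb 2 s) ≤ 3 / 4 := fun s hs => by
    rw [neg_mul_logb_two_eq, div_le_iff₀ (by positivity)]
    nlinarith [negMulLog_le_half hs]
  have htail : ∀ k, -(t (k + 1) * logb 2 (t (k + 1))) ≤ 3 / 16 * (1 / 4) ^ k := fun k => by
    have hsqrt : √(t (k + 1)) ≤ (1 / 4) ^ (k + 2) := by
      rw [sqrt_le_left (by positivity)]
      calc t (k + 1) ≤ (1 / 16) ^ (k + 2) := hdecay k
        _ = ((1 / 4) ^ (k + 2)) ^ 2 := by rw [← pow_mul, mul_comm, pow_mul]; norm_num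
    rw [neg_mul_logb_two_eq, div_le_iff₀ (by positivity)]
    nlinarith [negMulLog_le_two_mul_sqrt (ht (k + 1)), sqrt_nonneg (t (k + 1)),
      show (1 / 4 : ℝ) ^ (k + 2) = 1 / 16 * (1 / 4) ^ k by ring]
  have hgeom : ∑' k : ℕ, ENNReal.ofReal (3 / 16 * (1 / 4) ^ k) = ENNReal.ofReal (1 / 4) := by
    rw [← ENNReal.ofReal_tsum_of_nonneg (fun k => by positivity)
      ((summable_geometric_of_lt_one (by norm_num) (by norm_num)).mul_left _),
      tsum_mul_left, tsum_geometric_of_lt_one (by norm_num) (by norm_num)]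
    norm_num
  calc ENNReal.ofReal (-(u * logb 2 u)) + ∑' k, ENNReal.ofReal (-(t k * logb 2 (t k)))
      = ENNReal.ofReal (-(u * logb 2 u)) + (ENNReal.ofReal (-(t 0 * logb 2 (t 0))) +
          ∑' k, ENNReal.ofReal (-(t (k + 1) * logb 2 (t (k + 1))))) := by
        rw [tsum_eq_zero_add' ENNReal.summable]
    _ ≤ ENNReal.ofReal (3 / 4) + (ENNReal.ofReal (3 / 4) +
          ∑' k : ℕ, ENNReal.ofReal (3 / 16 * (1 / 4) ^ k)) := by
        gcongr with k
        · exact hsmall u hu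
        · exact hsmall _ (ht 0)
        · exact htail k
    _ = ENNReal.ofReal (7 / 4) := by
        rw [hgeom, ← ENNReal.ofReal_add (by norm_num) (by norm_num),
          ← ENNReal.ofReal_add (by norm_num) (by norm_num)]
        norm_num
    _ < 2 := by
        rw [ENNReal.ofReal_lt_iff_lt_toReal (by norm_num) ENNReal.ofNat_ne_top]
        norm_num

lemma Htilde_lt_two {y : ℤ → ℕ} (hy : y ∈ DeficientSet ℕ)
    (hdecay : ∀ k, symFreq y (k + 1) ≤ (1 / 16) ^ (k + 2)) : Htilde y < 2 := by
  obtain ⟨c, hc, hc1⟩ := hy.2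
  have hrho : rho y = c := hc.tsum_eq
  exact ofReal_neg_mul_logb_add_tsum_lt_two (fun k => (symFreq_pos hy k).le) hdecay
    (by rw [hrho]; linarith)

end Entropy

section FactorMap

variable {Λ : Type*}

-- Unlike `symFreq`, defined and measurable for every `x`; it agrees with `symFreq` on deficient
-- points (`upperFreq_eq_ofReal`).
noncomputable def upperFreq (x : ℤ → Λ) (a : Λ) : ℝ≥0∞ :=
  limsup (fun N => ENNReal.ofReal (wordFreq x [a] N)) atTop

noncomputable def blockCode (e : Λ ≃ ℕ) (x : ℤ → Λ) (a : Λ) : ℕ :=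
  blockIndex (upperFreq x ∘ e.symm) (e a)

noncomputable def entropyReduction (e : Λ ≃ ℕ) (x : ℤ → Λ) : ℤ → ℕ := blockCode e x ∘ x

variable {x : ℤ → Λ}

lemma upperFreq_eq_ofReal (hx : x ∈ DeficientSet Λ) (a : Λ) :
    upperFreq x a = ENNReal.ofReal (symFreq x a) :=
  ((ENNReal.continuous_ofReal.tendsto _).comp (tendsto_wordFreq_symFreq hx a)).limsup_eq

lemma upperFreq_shift (hx : x ∈ DeficientSet Λ) : upperFreq (shift x) = upperFreq x := by
  funext a
  rw [upperFreq_eq_ofReal hx]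
  exact ((ENNReal.continuous_ofReal.tendsto _).comp
    (tendsto_wordFreq_shift (tendsto_wordFreq_symFreq hx a))).limsup_eq

lemma entropyReduction_shift (e : Λ ≃ ℕ) (hx : x ∈ DeficientSet Λ) :
    entropyReduction e (shift x) = shift (entropyReduction e x) := by
  funext i
  simp only [entropyReduction, Function.comp_apply, blockCode, upperFreq_shift hx]
  rfl

lemma tsum_upperFreq_ne_top (e : Λ ≃ ℕ) (hx : x ∈ DeficientSet Λ) :
    ∑' m, (upperFreq x ∘ e.symm) m ≠ ∞ := by
  obtain ⟨c, hc, -⟩ := hx.2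
  rw [Function.comp_def, e.symm.tsum_eq (upperFreq x), funext (upperFreq_eq_ofReal hx),
    ← ENNReal.ofReal_tsum_of_nonneg (fun a => (symFreq_pos hx a).le) hc.summable]
  exact ENNReal.ofReal_ne_top

lemma mem_map_block_iff (e : Λ ≃ ℕ) (hx : x ∈ DeficientSet Λ) (a : Λ) (k : ℕ) :
    a ∈ (block (upperFreq x ∘ e.symm) k).map e.symm.toEmbedding ↔ blockCode e x a = k := by
  rw [Finset.mem_map_equiv, mem_block_iff (tsum_upperFreq_ne_top e hx)]
  simp [blockCode]

lemma entropyReduction_mem_deficientSet (e : Λ ≃ ℕ) (hx : x ∈ DeficientSet Λ) :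
    entropyReduction e x ∈ DeficientSet ℕ :=
  comp_mem_deficientSet (mem_map_block_iff e hx)
    (fun k => ⟨_, mem_map_of_mem _ (blockStart_mem_block (tsum_upperFreq_ne_top e hx) k)⟩) hx

lemma symFreq_entropyReduction_succ_le (e : Λ ≃ ℕ) (hx : x ∈ DeficientSet Λ) (k : ℕ) :
    symFreq (entropyReduction e x) (k + 1) ≤ (1 / 16) ^ (k + 2) := by
  rw [entropyReduction, symFreq_comp (mem_map_block_iff e hx) hx]
  have hmass : ENNReal.ofReal (∑ a ∈ (block (upperFreq x ∘ e.symm) (k + 1)).map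
      e.symm.toEmbedding, symFreq x a) < blockThreshold (k + 1) := by
    rw [ENNReal.ofReal_sum_of_nonneg (fun a _ => (symFreq_pos hx a).le), sum_map]
    simpa [upperFreq_eq_ofReal hx] using sum_block_succ_lt (tsum_upperFreq_ne_top e hx) k
  exact ((ENNReal.ofReal_lt_ofReal_iff (by positivity)).1 hmass).le

end FactorMap

section Measurability

variable {Λ : Type*} [MeasurableSpace Λ] [MeasurableSingletonClass Λ]

lemma measurableSet_occursAt (w : List Λ) (i : ℤ) :
    MeasurableSet {x : ℤ → Λ | OccursAt x w i} := by
  simp only [OccursAt, Set.ofPred_forall]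
  exact .iInter fun j => measurable_pi_apply _ (measurableSet_singleton _)

lemma measurable_wordFreq (w : List Λ) (N : ℕ) :
    Measurable fun x : ℤ → Λ => wordFreq x w N := by
  unfold wordFreq
  refine Measurable.div_const (Finset.measurable_sum _ fun i _ => ?_) _
  exact Measurable.ite (measurableSet_occursAt w i) measurable_const measurable_const

lemma measurable_upperFreq (a : Λ) : Measurable fun x : ℤ → Λ => upperFreq x a :=
  Measurable.limsup fun N => ENNReal.measurable_ofReal.comp (measurable_wordFreq [a] N)

lemma measurable_blockIndex {X : Type*} [MeasurableSpace X] {p : X → ℕ → ℝ≥0∞}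
    (hp : ∀ m, Measurable fun x => p x m) (m : ℕ) : Measurable fun x => blockIndex (p x) m := by
  have htail : ∀ n, Measurable fun x => tailMass (p x) n := fun n =>
    Measurable.tsum fun i => hp (i + n)
  simp only [blockIndex, card_eq_sum_ones, sum_filter]
  exact Finset.measurable_sum _ fun k _ =>
    Measurable.ite (measurableSet_lt (htail _) measurable_const) measurable_const measurable_const

lemma measurable_entropyReduction [Countable Λ] (e : Λ ≃ ℕ) :
    Measurable (entropyReduction e) := by
  have hcode : Measurable fun q : (ℤ → Λ) × Λ => blockCode e q.1 q.2 :=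
    measurable_from_prod_countable_left fun a =>
      measurable_blockIndex (p := fun x => upperFreq x ∘ e.symm)
        (fun m => measurable_upperFreq _) (e a)
  refine measurable_pi_lambda _ fun i => ?_
  change Measurable ((fun q : (ℤ → Λ) × Λ => blockCode e q.1 q.2) ∘ fun x => (x, x i))
  exact hcode.comp (measurable_id.prodMk (measurable_pi_apply i))

end Measurability

/-- **Reducing the entropy.** There is a factor map `π : Deficient(Λ^ℤ) → ℕ^ℤ` with image
contained in `Deficient(ℕ^ℤ)`, such that `H̃(π(x)) < 2` for every deficient `x`, and `π`
maps regular points to regular points. -/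
theorem reduce_entropy {Λ : Type*} [Countable Λ]
    [MeasurableSpace Λ] [DiscreteMeasurableSpace Λ] :
    ∃ π : (ℤ → Λ) → (ℤ → ℕ),
      Measurable π ∧
      (∀ x ∈ DeficientSet Λ, π (shift x) = shift (π x)) ∧
      (∀ x ∈ DeficientSet Λ, π x ∈ DeficientSet ℕ) ∧
      (∀ x ∈ DeficientSet Λ, Htilde (π x) < 2) ∧
      (∀ x ∈ DeficientSet Λ, Regular x → Regular (π x)) := by
  rcases finite_or_infinite Λ with hfin | hinf
  · refine ⟨fun _ _ => 0, measurable_const, ?_⟩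
    simp [deficientSet_eq_empty_of_finite]
  · obtain ⟨_⟩ := nonempty_denumerable Λ
    let e := Denumerable.eqv Λ
    exact ⟨entropyReduction e, measurable_entropyReduction e,
      fun x hx => entropyReduction_shift e hx,
      fun x hx => entropyReduction_mem_deficientSet e hx,
      fun x hx => Htilde_lt_two (entropyReduction_mem_deficientSet e hx)
        (symFreq_entropyReduction_succ_le e hx),
      fun x hx hreg => hreg.comp (mem_map_block_iff e hx)⟩
end

section
/- Let (X, 𝓑, T) be a Borel system and x ↦ F_x an allocation. Then there exists a Borel equivariant map π : X → {0,1}^ℤ (with π(Tx) = S(π(x)) for the shift S) such that the join of the σ-algebra σ(π) generated by π and the σ-algebra σ(F) generated by x ↦ F_x equals 𝓑: σ(π) ∨ σ(F) = 𝓑. -/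
/-!
Fix a Borel injection `g : X → {0,1}^ℕ`. Write the bit `g (Tⁱ x) j` at the site `F x (i, j)` of
`ℤ`, and `0` at the sites that `F x` misses. The resulting `π` is Borel and, by the equivariance
of `F`, shift-equivariant. Since `F x` is injective, `g x j` can be read off as `π x (F x (0, j))`,
so `x ↦ (π x, F x)` is a Borel injection out of a standard Borel space, hence a Borel embedding,
and the σ-algebra it pulls back is all of `𝓑`.
-/

open MeasurableSpace Function

theorem MeasurableSpace.comap_sup_comap_eq_of_injective {X α β : Type*} [MeasurableSpace X]
    [StandardBorelSpace X] [MeasurableSpace α] [MeasurableSpace β] [CountablySeparated (α × β)]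
    {f : X → α} {g : X → β} (hf : Measurable f) (hg : Measurable g)
    (hinj : Injective fun x ↦ (f x, g x)) :
    MeasurableSpace.comap f ‹_› ⊔ MeasurableSpace.comap g ‹_› = ‹MeasurableSpace X› := by
  rw [← comap_prodMk]
  exact ((hf.prodMk hg).measurableEmbedding hinj).comap_eq

theorem Equiv.Perm.measurable_zpow {X : Type*} [MeasurableSpace X] {T : Equiv.Perm X}
    (hT : Measurable T) (hTinv : Measurable T.symm) (i : ℤ) : Measurable ⇑(T ^ i) := by
  induction i using Int.induction_on with
  | zero => exact measurable_id
  | succ k ih => rw [zpow_add_one]; exact ih.comp hT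
  | pred k ih => rw [zpow_sub_one]; exact ih.comp hTinv

section allocationCode

variable {X : Type*} {T : Equiv.Perm X} {F : X → ℤ × ℕ → ℤ} {g : X → ℕ → Bool}

open Classical in
noncomputable def allocationCode (T : Equiv.Perm X) (F : X → ℤ × ℕ → ℤ) (g : X → ℕ → Bool)
    (x : X) (n : ℤ) : Bool :=
  decide (∃ p : ℤ × ℕ, F x p = n ∧ g ((T ^ p.1) x) p.2 = true)

theorem measurable_allocationCode [MeasurableSpace X] (hT : Measurable T)
    (hTinv : Measurable T.symm) (hF : Measurable F) (hg : Measurable g) :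
    Measurable (allocationCode T F g) := by
  refine measurable_pi_lambda _ fun n ↦ measurable_to_bool ?_
  have : (allocationCode T F g · n) ⁻¹' {true} =
      ⋃ p : ℤ × ℕ, {x | F x p = n} ∩ (fun x ↦ g ((T ^ p.1) x) p.2) ⁻¹' {true} := by
    ext x; simp [allocationCode]
  rw [this]
  exact .iUnion fun p ↦ ((measurable_pi_apply p).comp hF (measurableSet_singleton n)).inter
    ((measurable_pi_apply p.2).comp (hg.comp (T.measurable_zpow hT hTinv p.1))
      (measurableSet_singleton true))

theorem allocationCode_apply_perm
    (hF : ∀ (x : X) (i : ℤ) (j : ℕ), F (T x) (i, j) = F x (i + 1, j) - 1) (x : X) :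
    allocationCode T F g (T x) = fun n ↦ allocationCode T F g x (n + 1) := by
  funext n
  simp only [allocationCode, decide_eq_decide]
  constructor
  · rintro ⟨⟨i, j⟩, hFn, hgT⟩
    refine ⟨(i + 1, j), by rw [hF] at hFn; omega, ?_⟩
    rwa [zpow_add_one]
  · rintro ⟨⟨i, j⟩, hFn, hgT⟩
    refine ⟨(i - 1, j), by rw [hF, sub_add_cancel, hFn]; ring, ?_⟩
    rwa [← Equiv.Perm.mul_apply, ← zpow_add_one, sub_add_cancel]

theorem allocationCode_apply_zero {x : X} (hinj : Injective (F x)) (j : ℕ) :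
    allocationCode T F g x (F x (0, j)) = g x j := by
  have : (∃ p : ℤ × ℕ, F x p = F x (0, j) ∧ g ((T ^ p.1) x) p.2 = true) ↔ g x j = true :=
    ⟨fun ⟨p, hp, hgp⟩ ↦ by obtain rfl := hinj hp; exact hgp, fun h ↦ ⟨(0, j), rfl, h⟩⟩
  simp [allocationCode, this]

end allocationCode

/-- **Generators from allocations.** Let `(X,𝓑,T)` be a Borel system and `x ↦ F_x` an
allocation (a Borel, equivariant assignment of injections `ℤ×ℕ → ℤ`). Then there is a Borel
equivariant map `π : X → {0,1}^ℤ` such that `σ(π) ∨ σ(F) = 𝓑`. -/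
theorem allocation_gives_generator {X : Type*} [MeasurableSpace X] [StandardBorelSpace X]
    (T : Equiv.Perm X) (hT : Measurable T) (hTinv : Measurable T.symm)
    (F : X → (ℤ × ℕ → ℤ)) (hFmeas : Measurable F)
    (hFinj : ∀ x, Function.Injective (F x))
    (hFequiv : ∀ (x : X) (i : ℤ) (j : ℕ), F (T x) (i, j) = F x (i + 1, j) - 1) :
    ∃ π : X → (ℤ → Bool),
      Measurable π ∧
      (∀ x : X, π (T x) = fun i => π x (i + 1)) ∧
      MeasurableSpace.comap π inferInstance ⊔ MeasurableSpace.comap F inferInstance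
        = ‹MeasurableSpace X› := by
  obtain ⟨g, hg, hginj⟩ := measurable_injection_nat_bool_of_countablySeparated X
  have hπ := measurable_allocationCode hT hTinv hFmeas hg
  refine ⟨allocationCode T F g, hπ, allocationCode_apply_perm hFequiv,
    comap_sup_comap_eq_of_injective hπ hFmeas fun x y hxy ↦ hginj ?_⟩
  obtain ⟨hπxy, hFxy⟩ := Prod.mk.inj hxy
  funext j
  calc g x j = allocationCode T F g x (F x (0, j)) := (allocationCode_apply_zero (hFinj x) j).symm
    _ = allocationCode T F g y (F y (0, j)) := by rw [hπxy, hFxy]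
    _ = g y j := allocationCode_apply_zero (hFinj y) j
end

section
/- Let (X, 𝓑, T) be a Borel system, let α ⊆ 𝓑 be a countable partition, and let A_i, B_i ∈ 𝓑 (i ∈ ℕ). Suppose X = def(α) ∪ ⋃_{i=1}^∞ nul(A_i) ∪ ⋃_{i=1}^∞ div(B_i). Then there exist Borel sets A, B ∈ 𝓑 such that X = def(α) ∪ nul(A) ∪ div(B) and this union is disjoint. -/
open Filter
open scoped Classical

/-- The frequency of visits of the first `N` points of the forward orbit of `x` to `A`:
`S_N(x,A) = (1/N) · #{0 ≤ i < N : T^i x ∈ A}`. -/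
noncomputable def visitFreq {X : Type*} (T : Equiv.Perm X) (A : Set X) (x : X) (N : ℕ) : ℝ :=
  (∑ i ∈ Finset.range N, if (T ^ i) x ∈ A then (1 : ℝ) else 0) / N

/-- The set of `A`-null points: `x ∈ ⋃_{n∈ℤ} T^n A` and `s(x,A) = 0`. -/
def nulSet {X : Type*} (T : Equiv.Perm X) (A : Set X) : Set X :=
  {x | (∃ n : ℤ, x ∈ ⇑(T ^ n) '' A) ∧ Tendsto (visitFreq T A x) atTop (nhds 0)}

/-- The set of `A`-divergent points: those `x` for which `S_N(x,A)` fails to converge. -/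
def divSet {X : Type*} (T : Equiv.Perm X) (A : Set X) : Set X :=
  {x | ¬ ∃ L : ℝ, Tendsto (visitFreq T A x) atTop (nhds L)}

/-- The set of `α`-deficient points for a countable partition `α = {A_i}_{i∈ℕ}`: the points
`x` such that `s(x,A_i)` exists and is positive for every `i`, and `∑_i s(x,A_i) < 1`. -/
def defSet {X : Type*} (T : Equiv.Perm X) (α : ℕ → Set X) : Set X :=
  {x | ∃ L : ℕ → ℝ,
    (∀ i, 0 < L i ∧ Tendsto (visitFreq T (α i) x) atTop (nhds (L i))) ∧
    ∃ c : ℝ, HasSum L c ∧ c < 1}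

/-! The sets `def(α)`, `nul(A_i)` and `div(B_i)` are `T`-invariant, because replacing `x` by
`T x` changes `S_N(x, A)` by at most `1/N`. Hence so are the Borel sets
`P_i = nul(A_i) \ (def(α) ∪ ⋃_{j<i} nul(A_j))`, which are pairwise disjoint, and the orbit of a
point of `P_i` meets `A = ⋃_j A_j ∩ P_j` exactly where it meets `A_i`. So
`nul(A) = ⋃_i nul(A_i) \ def(α)`, and in the same way
`div(B) = ⋃_i div(B_i) \ (def(α) ∪ ⋃_i nul(A_i))` for a suitable `B`. -/

section

open Set Function Topology MeasureTheory

variable {X : Type*} {T : Equiv.Perm X}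

theorem Equiv.Perm.preimage_zpow_eq_self {S : Set X} (h : T ⁻¹' S = S) (n : ℤ) :
    ⇑(T ^ n) ⁻¹' S = S := by
  have hinv : ⇑T⁻¹ ⁻¹' S = S := by
    rw [← h, Equiv.Perm.coe_inv, Equiv.symm_preimage_preimage, h]
  induction n using Int.induction_on with
  | zero => rfl
  | succ k ih => rw [zpow_add_one, Equiv.Perm.coe_mul, preimage_comp, ih, h]
  | pred k ih => rw [zpow_sub_one, Equiv.Perm.coe_mul, preimage_comp, ih, hinv]

theorem Equiv.Perm.zpow_apply_mem_iff {S : Set X} (h : T ⁻¹' S = S) (n : ℤ) {x : X} :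
    (T ^ n) x ∈ S ↔ x ∈ S := by
  rw [← mem_preimage, Equiv.Perm.preimage_zpow_eq_self h]

theorem exists_mem_zpow_image_iff {A : Set X} {x : X} :
    (∃ n : ℤ, x ∈ ⇑(T ^ n) '' A) ↔ ∃ n : ℤ, (T ^ n) x ∈ A := by
  simp only [Equiv.image_eq_preimage_symm, mem_preimage, ← Equiv.Perm.inv_def, ← zpow_neg]
  exact ⟨fun ⟨n, h⟩ => ⟨-n, h⟩, fun ⟨n, h⟩ => ⟨-n, by rwa [neg_neg]⟩⟩

theorem visitFreq_congr {A A' : Set X} {x : X} (h : ∀ n : ℕ, (T ^ n) x ∈ A ↔ (T ^ n) x ∈ A') :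
    visitFreq T A x = visitFreq T A' x := by
  funext N
  simp only [visitFreq, h]

theorem visitFreq_empty (x : X) : visitFreq T ∅ x = 0 := by
  funext N
  simp [visitFreq]

theorem abs_visitFreq_apply_sub_le (A : Set X) (x : X) (N : ℕ) :
    |visitFreq T A (T x) N - visitFreq T A x N| ≤ 1 / N := by
  set g : ℕ → ℝ := fun i => if (T ^ i) x ∈ A then 1 else 0
  have hshift : ∀ i, (if (T ^ i) (T x) ∈ A then (1 : ℝ) else 0) = g (i + 1) := fun i => by
    simp only [g, pow_succ, Equiv.Perm.mul_apply]
  have hdiff : visitFreq T A (T x) N - visitFreq T A x N = (g N - g 0) / N := by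
    rw [visitFreq, visitFreq, ← sub_div]
    simp only [hshift]
    rw [← Finset.sum_range_sub g N, Finset.sum_sub_distrib]
  have hg : ∀ i, 0 ≤ g i ∧ g i ≤ 1 := fun i => by
    by_cases h : (T ^ i) x ∈ A <;> simp [g, h]
  rw [hdiff, abs_div, Nat.abs_cast]
  gcongr
  exact abs_sub_le_of_nonneg_of_le (hg N).1 (hg N).2 (hg 0).1 (hg 0).2

theorem tendsto_visitFreq_apply_iff {A : Set X} {x : X} {L : ℝ} :
    Tendsto (visitFreq T A (T x)) atTop (𝓝 L) ↔ Tendsto (visitFreq T A x) atTop (𝓝 L) :=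
  tendsto_iff_of_dist <| squeeze_zero (fun _ => dist_nonneg)
    (fun N => (Real.dist_eq _ _).trans_le (abs_visitFreq_apply_sub_le A x N))
    tendsto_one_div_atTop_nhds_zero_nat

theorem preimage_nulSet (A : Set X) : T ⁻¹' nulSet T A = nulSet T A := by
  have hshift : ∀ (n : ℤ) x, (T ^ n) (T x) = (T ^ (n + 1)) x := fun n x => by
    rw [zpow_add_one, Equiv.Perm.mul_apply]
  ext x
  simp only [nulSet, mem_preimage, mem_ofPred_eq, exists_mem_zpow_image_iff, hshift,
    tendsto_visitFreq_apply_iff]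
  exact and_congr_left' ⟨fun ⟨n, h⟩ => ⟨n + 1, h⟩, fun ⟨n, h⟩ => ⟨n - 1, by rwa [sub_add_cancel]⟩⟩

theorem preimage_divSet (A : Set X) : T ⁻¹' divSet T A = divSet T A := by
  ext x
  simp only [divSet, mem_preimage, mem_ofPred_eq, tendsto_visitFreq_apply_iff]

theorem preimage_defSet (α : ℕ → Set X) : T ⁻¹' defSet T α = defSet T α := by
  ext x
  simp only [defSet, mem_preimage, mem_ofPred_eq, tendsto_visitFreq_apply_iff]


theorem Set.preimage_disjointed {ι Y : Type*} [Preorder ι] [LocallyFiniteOrderBot ι]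
    (g : Y → X) (f : ι → Set X) (i : ι) :
    g ⁻¹' disjointed f i = disjointed (fun j => g ⁻¹' f j) i := by
  simp only [disjointed_eq_inter_compl, preimage_inter, preimage_iInter, preimage_compl]

theorem mem_iUnion_inter_iff_of_mem {ι : Type*} {P C : ι → Set X}
    (hP : Pairwise (Disjoint on P)) {i : ι} {y : X} (hy : y ∈ P i) :
    y ∈ ⋃ j, C j ∩ P j ↔ y ∈ C i := by
  refine ⟨fun h => ?_, fun h => mem_iUnion.2 ⟨i, h, hy⟩⟩
  obtain ⟨j, hC, hPj⟩ := mem_iUnion.1 h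
  obtain rfl : j = i := hP.eq (not_disjoint_iff.2 ⟨y, hPj, hy⟩)
  exact hC

theorem iUnion_inter_disjointed_sdiff {ι : Type*} [PartialOrder ι] [LocallyFiniteOrderBot ι]
    (f : ι → Set X) (S : Set X) :
    ⋃ i, f i ∩ (disjointed f i \ S) = (⋃ i, f i) \ S := by
  simp only [inter_eq_right.2 (sdiff_subset.trans (disjointed_subset f _)), ← iUnion_sdiff,
    iUnion_disjointed]

section Patching

variable {ι : Type*} {P : ι → Set X} (C : ι → Set X)

theorem exists_mem_of_zpow_apply_mem_iUnion_inter (hPT : ∀ i, T ⁻¹' P i = P i) {n : ℤ} {x : X}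
    (h : (T ^ n) x ∈ ⋃ j, C j ∩ P j) : ∃ j, x ∈ P j := by
  obtain ⟨j, -, hj⟩ := mem_iUnion.1 h
  exact ⟨j, (Equiv.Perm.zpow_apply_mem_iff (hPT j) n).1 hj⟩

theorem zpow_apply_mem_iUnion_inter_iff (hPT : ∀ i, T ⁻¹' P i = P i)
    (hP : Pairwise (Disjoint on P)) {i : ι} {x : X} (hx : x ∈ P i) (n : ℤ) :
    (T ^ n) x ∈ ⋃ j, C j ∩ P j ↔ (T ^ n) x ∈ C i :=
  mem_iUnion_inter_iff_of_mem hP ((Equiv.Perm.zpow_apply_mem_iff (hPT i) n).2 hx)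

theorem visitFreq_iUnion_inter_of_mem (hPT : ∀ i, T ⁻¹' P i = P i)
    (hP : Pairwise (Disjoint on P)) {i : ι} {x : X} (hx : x ∈ P i) :
    visitFreq T (⋃ j, C j ∩ P j) x = visitFreq T (C i) x :=
  visitFreq_congr fun n => by
    simpa only [zpow_natCast] using zpow_apply_mem_iUnion_inter_iff C hPT hP hx n

theorem nulSet_iUnion_inter (hPT : ∀ i, T ⁻¹' P i = P i) (hP : Pairwise (Disjoint on P)) :
    nulSet T (⋃ j, C j ∩ P j) = ⋃ i, nulSet T (C i) ∩ P i := by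
  have hmem : ∀ {i x}, x ∈ P i → (x ∈ nulSet T (⋃ j, C j ∩ P j) ↔ x ∈ nulSet T (C i)) :=
    fun hx => by
      simp only [nulSet, mem_ofPred_eq, exists_mem_zpow_image_iff,
        zpow_apply_mem_iUnion_inter_iff C hPT hP hx, visitFreq_iUnion_inter_of_mem C hPT hP hx]
  ext x
  refine ⟨fun hx => ?_, fun hx => ?_⟩
  · obtain ⟨n, hn⟩ := exists_mem_zpow_image_iff.1 hx.1
    obtain ⟨i, hxi⟩ := exists_mem_of_zpow_apply_mem_iUnion_inter C hPT hn
    exact mem_iUnion.2 ⟨i, (hmem hxi).1 hx, hxi⟩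
  · obtain ⟨i, hx, hxi⟩ := mem_iUnion.1 hx
    exact (hmem hxi).2 hx

theorem divSet_iUnion_inter (hPT : ∀ i, T ⁻¹' P i = P i) (hP : Pairwise (Disjoint on P)) :
    divSet T (⋃ j, C j ∩ P j) = ⋃ i, divSet T (C i) ∩ P i := by
  ext x
  by_cases hx : ∃ i, x ∈ P i
  · obtain ⟨i, hx⟩ := hx
    have hP' : ∀ j, x ∈ P j ↔ j = i := fun j =>
      ⟨fun hj => hP.eq (not_disjoint_iff.2 ⟨x, hj, hx⟩), fun h => h ▸ hx⟩
    simp only [divSet, mem_iUnion, mem_inter_iff, mem_ofPred_eq, hP', exists_eq_right,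
      visitFreq_iUnion_inter_of_mem C hPT hP hx]
  · push Not at hx
    have hfreq : visitFreq T (⋃ j, C j ∩ P j) x = 0 := by
      rw [← visitFreq_empty x]
      refine visitFreq_congr fun n => iff_of_false (fun h => ?_) (notMem_empty _)
      obtain ⟨j, hj⟩ := exists_mem_of_zpow_apply_mem_iUnion_inter C hPT
        (by rwa [zpow_natCast] : (T ^ (n : ℤ)) x ∈ ⋃ j, C j ∩ P j)
      exact hx j hj
    simp only [divSet, mem_iUnion, mem_inter_iff, mem_ofPred_eq, hfreq, hx, and_false,
      exists_false, iff_false, not_not]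
    exact ⟨0, tendsto_const_nhds⟩

end Patching

variable [MeasurableSpace X]

theorem measurable_perm_zpow (hT : Measurable T) (hTinv : Measurable T.symm) (n : ℤ) :
    Measurable ⇑(T ^ n) := by
  cases n with
  | ofNat m => rw [Int.ofNat_eq_natCast, zpow_natCast, Equiv.Perm.coe_pow]; exact hT.iterate m
  | negSucc m =>
    rw [zpow_negSucc, ← inv_pow, Equiv.Perm.coe_pow, Equiv.Perm.coe_inv]
    exact hTinv.iterate (m + 1)

theorem measurable_visitFreq (hT : Measurable T) {A : Set X} (hA : MeasurableSet A) (N : ℕ) :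
    Measurable fun x => visitFreq T A x N := by
  refine Measurable.div_const (Finset.measurable_sum _ fun i _ => ?_) _
  rw [Equiv.Perm.coe_pow]
  exact Measurable.ite (hT.iterate i hA) measurable_const measurable_const

theorem measurableSet_nulSet (hT : Measurable T) (hTinv : Measurable T.symm) {A : Set X}
    (hA : MeasurableSet A) : MeasurableSet (nulSet T A) := by
  have horbit : MeasurableSet {x | ∃ n : ℤ, (T ^ n) x ∈ A} := by
    simp only [ofPred_exists]
    exact .iUnion fun n => measurable_perm_zpow hT hTinv n hA
  simp only [nulSet, exists_mem_zpow_image_iff, ofPred_and]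
  exact horbit.inter (measurableSet_tendsto _ fun N => measurable_visitFreq hT hA N)

theorem measurableSet_divSet (hT : Measurable T) {A : Set X} (hA : MeasurableSet A) :
    MeasurableSet (divSet T A) :=
  (measurableSet_exists_tendsto fun N => measurable_visitFreq hT hA N).compl

theorem measurableSet_summable {ι : Type*} [Countable ι] {f : ι → X → ℝ}
    (hf : ∀ i, Measurable (f i)) : MeasurableSet {x | Summable (f · x)} :=
  measurableSet_exists_tendsto fun s => Finset.measurable_sum s fun i _ => hf i

theorem measurableSet_defSet (hT : Measurable T) {α : ℕ → Set X}
    (hα : ∀ i, MeasurableSet (α i)) : MeasurableSet (defSet T α) := by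
  set s : ℕ → X → ℝ := fun i x => limUnder atTop (visitFreq T (α i) x)
  have hs : ∀ i, Measurable (s i) := fun i =>
    (StronglyMeasurable.limUnder fun N =>
      (measurable_visitFreq hT (hα i) N).stronglyMeasurable).measurable
  have heq : defSet T α = (⋂ i, {x | ∃ c, Tendsto (visitFreq T (α i) x) atTop (𝓝 c)} ∩
      {x | 0 < s i x}) ∩ {x | Summable (s · x)} ∩ {x | ∑' i, s i x < 1} := by
    ext x
    simp only [defSet, mem_inter_iff, mem_iInter, mem_ofPred_eq]
    constructor
    · rintro ⟨L, hL, c, hc, hc1⟩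
      have hsL : ∀ i, s i x = L i := fun i => (hL i).2.limUnder_eq
      have hsL' : (s · x) = L := funext hsL
      exact ⟨⟨fun i => ⟨⟨L i, (hL i).2⟩, hsL i ▸ (hL i).1⟩, hsL' ▸ hc.summable⟩,
        hsL' ▸ hc.tsum_eq ▸ hc1⟩
    · rintro ⟨⟨hconv, hsum⟩, hlt⟩
      exact ⟨(s · x), fun i => ⟨(hconv i).2, tendsto_nhds_limUnder (hconv i).1⟩, _,
        hsum.hasSum, hlt⟩
  rw [heq]
  refine ((MeasurableSet.iInter fun i => ?_).inter (measurableSet_summable hs)).inter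
    (measurableSet_lt (Measurable.tsum hs) measurable_const)
  exact (measurableSet_exists_tendsto fun N => measurable_visitFreq hT (hα i) N).inter
    (measurableSet_lt measurable_const (hs i))

theorem exists_nulSet_eq_iUnion_sdiff (hT : Measurable T) (hTinv : Measurable T.symm)
    {A : ℕ → Set X} (hA : ∀ i, MeasurableSet (A i)) {S : Set X} (hST : T ⁻¹' S = S)
    (hS : MeasurableSet S) :
    ∃ A', MeasurableSet A' ∧ nulSet T A' = (⋃ i, nulSet T (A i)) \ S := by
  set P : ℕ → Set X := fun i => disjointed (fun j => nulSet T (A j)) i \ S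
  have hPT : ∀ i, T ⁻¹' P i = P i := fun i => by
    simp only [P, preimage_sdiff, hST, preimage_disjointed, preimage_nulSet]
  have hP : Pairwise (Disjoint on P) :=
    (disjoint_disjointed _).mono fun _ _ h => h.mono sdiff_subset sdiff_subset
  refine ⟨⋃ i, A i ∩ P i, .iUnion fun i => (hA i).inter ?_, ?_⟩
  · exact (MeasurableSet.disjointed (fun j => measurableSet_nulSet hT hTinv (hA j)) i).diff hS
  · rw [nulSet_iUnion_inter A hPT hP, iUnion_inter_disjointed_sdiff]

theorem exists_divSet_eq_iUnion_sdiff (hT : Measurable T) {B : ℕ → Set X}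
    (hB : ∀ i, MeasurableSet (B i)) {S : Set X} (hST : T ⁻¹' S = S) (hS : MeasurableSet S) :
    ∃ B', MeasurableSet B' ∧ divSet T B' = (⋃ i, divSet T (B i)) \ S := by
  set Q : ℕ → Set X := fun i => disjointed (fun j => divSet T (B j)) i \ S
  have hQT : ∀ i, T ⁻¹' Q i = Q i := fun i => by
    simp only [Q, preimage_sdiff, hST, preimage_disjointed, preimage_divSet]
  have hQ : Pairwise (Disjoint on Q) :=
    (disjoint_disjointed _).mono fun _ _ h => h.mono sdiff_subset sdiff_subset
  refine ⟨⋃ i, B i ∩ Q i, .iUnion fun i => (hB i).inter ?_, ?_⟩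
  · exact (MeasurableSet.disjointed (fun j => measurableSet_divSet hT (hB j)) i).diff hS
  · rw [divSet_iUnion_inter B hQT hQ, iUnion_inter_disjointed_sdiff]

end

theorem disjointify_nul_div_general {X : Type*} [MeasurableSpace X]
    (T : Equiv.Perm X) (hT : Measurable T) (hTinv : Measurable T.symm)
    (α : ℕ → Set X) (hαm : ∀ i, MeasurableSet (α i))
    (A B : ℕ → Set X) (hA : ∀ i, MeasurableSet (A i)) (hB : ∀ i, MeasurableSet (B i))
    (hcover : defSet T α ∪ (⋃ i, nulSet T (A i)) ∪ (⋃ i, divSet T (B i)) = Set.univ) :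
    ∃ A' B' : Set X, MeasurableSet A' ∧ MeasurableSet B' ∧
      defSet T α ∪ nulSet T A' ∪ divSet T B' = Set.univ ∧
      Disjoint (defSet T α) (nulSet T A') ∧
      Disjoint (defSet T α) (divSet T B') ∧
      Disjoint (nulSet T A') (divSet T B') := by
  set D := defSet T α
  set N := ⋃ i, nulSet T (A i)
  have hD : MeasurableSet D := measurableSet_defSet hT hαm
  have hDN : MeasurableSet (D ∪ N) :=
    hD.union (.iUnion fun i => measurableSet_nulSet hT hTinv (hA i))
  have hDT : T ⁻¹' D = D := preimage_defSet α
  have hDNT : T ⁻¹' (D ∪ N) = D ∪ N := by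
    simp only [D, N, Set.preimage_union, Set.preimage_iUnion, preimage_defSet, preimage_nulSet]
  obtain ⟨A', hA'm, hA'⟩ := exists_nulSet_eq_iUnion_sdiff hT hTinv hA hDT hD
  obtain ⟨B', hB'm, hB'⟩ := exists_divSet_eq_iUnion_sdiff hT hB hDNT hDN
  refine ⟨A', B', hA'm, hB'm, ?_, ?_, ?_, ?_⟩
  · rw [hA', hB', Set.union_sdiff_self, Set.union_sdiff_self, hcover]
  · exact hA' ▸ Set.disjoint_sdiff_right
  · exact hB' ▸ Set.disjoint_sdiff_right.mono_left Set.subset_union_left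
  · rw [hA', hB']
    exact Set.disjoint_sdiff_right.mono_left (Set.sdiff_subset.trans Set.subset_union_right)

/-- **Disjointification.** If `X = def(α) ∪ ⋃_i nul(A_i) ∪ ⋃_i div(B_i)`, then there are
Borel sets `A, B` with `X = def(α) ∪ nul(A) ∪ div(B)`, the union being disjoint. -/
theorem disjointify_nul_div {X : Type*} [MeasurableSpace X] [StandardBorelSpace X]
    (T : Equiv.Perm X) (hT : Measurable T) (hTinv : Measurable T.symm)
    (α : ℕ → Set X) (hαm : ∀ i, MeasurableSet (α i))
    (hαd : Pairwise fun i j => Disjoint (α i) (α j)) (hαu : (⋃ i, α i) = Set.univ)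
    (A B : ℕ → Set X) (hA : ∀ i, MeasurableSet (A i)) (hB : ∀ i, MeasurableSet (B i))
    (hcover : defSet T α ∪ (⋃ i, nulSet T (A i)) ∪ (⋃ i, divSet T (B i)) = Set.univ) :
    ∃ A' B' : Set X, MeasurableSet A' ∧ MeasurableSet B' ∧
      defSet T α ∪ nulSet T A' ∪ divSet T B' = Set.univ ∧
      Disjoint (defSet T α) (nulSet T A') ∧
      Disjoint (defSet T α) (divSet T B') ∧
      Disjoint (nulSet T A') (divSet T B') :=
  disjointify_nul_div_general T hT hTinv α hαm A B hA hB hcover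
end

section
/- Let Σ be a countable alphabet and let x ∈ Σ^ℤ be aperiodic. Then for every ε > 0 there is a finite word a over Σ that occurs in x and satisfies s̲(x, a) < ε. -/
/-!
If an aperiodic `x` had fewer than `m` factors of every length, the number of factors of length
`L` would be bounded and nondecreasing in `L`, hence constant from some `L` to `L + 1`. Then every
factor of length `L` extends uniquely both to the right and to the left, so a single repeated factor
of length `L` propagates along all of `ℤ` and makes `x` periodic (Morse–Hedlund). Hence an aperiodic
`x` has, for every `m`, `m` distinct factors of a common length. Distinct words of equal length never
occur at the same position, so their frequencies sum to at most `1`, and one of them has lower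
frequency at most `1 / m`.
-/

open Filter
open scoped Classical

/-- A point of `Λ^ℤ` is aperiodic if no shift `S^p`, `p ≥ 1`, fixes it. -/
def Aperiodic {Λ : Type*} (x : ℤ → Λ) : Prop :=
  ∀ p : ℕ, 1 ≤ p → (fun i => x (i + (p : ℤ))) ≠ x

/-- The lower frequency `s̲(x,a)` of the word `a` in `x`. -/
noncomputable def lowerWordFreq {Λ : Type*} (x : ℤ → Λ) (a : List Λ) : ℝ :=
  liminf (wordFreq x a) atTop

section

variable {Λ : Type*}

lemma Aperiodic.not_periodic {x : ℤ → Λ} (hx : Aperiodic x) {p : ℤ} (hp : p ≠ 0) :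
    ¬ Function.Periodic x p := by
  intro hper
  have hper' : Function.Periodic x (p.natAbs : ℤ) := by
    rcases Int.natAbs_eq p with h | h
    · rwa [← h]
    · have hneg := hper.neg
      rwa [h, neg_neg] at hneg
  exact hx p.natAbs (Int.natAbs_pos.2 hp) (funext hper')

lemma Function.periodic_of_eq_iff_succ_eq {α : Type*} {w : ℤ → α}
    (hw : ∀ i j, w (i + 1) = w (j + 1) ↔ w i = w j) {u p : ℤ} (h : w (u + p) = w u) :
    Function.Periodic w p := by
  have step : ∀ s, w (s + 1 + p) = w (s + 1) ↔ w (s + p) = w s := fun s => by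
    rw [add_right_comm]; exact hw _ _
  intro s
  obtain ⟨k, rfl⟩ : ∃ k, s = u + k := ⟨s - u, by ring⟩
  induction k using Int.induction_on with
  | zero => simpa using h
  | succ k ih => rw [← add_assoc, step]; exact ih
  | pred k ih =>
    refine (step _).1 ?_
    rwa [show u + (-(k : ℤ) - 1) + 1 = u + -k by ring]

lemma Nat.exists_eq_succ_of_monotone_of_lt {f : ℕ → ℕ} {m : ℕ} (hf : Monotone f)
    (hlt : ∀ n, f n < m) : ∃ n, f n = f (n + 1) := by
  by_contra! hne
  have hmono : StrictMono f := strictMono_nat_of_lt_succ fun n => (hf n.le_succ).lt_of_ne (hne n)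
  exact (hlt m).not_ge hmono.le_apply

def window (x : ℤ → Λ) (L : ℕ) (i : ℤ) : Fin L → Λ := fun j => x (i + j)

section window

variable (x : ℤ → Λ) (L : ℕ)

lemma window_comp_castSucc (i : ℤ) : window x (L + 1) i ∘ Fin.castSucc = window x L i := rfl

lemma window_comp_succ (i : ℤ) : window x (L + 1) i ∘ Fin.succ = window x L (i + 1) := by
  funext j
  simp only [window, Function.comp_apply, Fin.val_succ]
  push_cast
  ring_nf

lemma occursAt_ofFn_window (i : ℤ) : OccursAt x (List.ofFn (window x L i)) i := by
  intro j
  simp [window]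

lemma range_window_eq_image_castSucc :
    Set.range (window x L) = (· ∘ Fin.castSucc) '' Set.range (window x (L + 1)) := by
  rw [← Set.range_comp]
  rfl

lemma range_window_eq_image_succ :
    Set.range (window x L) = (· ∘ Fin.succ) '' Set.range (window x (L + 1)) := by
  rw [← Set.range_comp, ← (add_right_surjective (1 : ℤ)).range_comp]
  congr 1
  funext i
  exact (window_comp_succ x L i).symm

variable {x L}

lemma window_eq_iff_of_ncard_eq (hfin : (Set.range (window x (L + 1))).Finite)
    (hcard : (Set.range (window x L)).ncard = (Set.range (window x (L + 1))).ncard) (i j : ℤ) :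
    (window x L i = window x L j ↔ window x (L + 1) i = window x (L + 1) j) ∧
      (window x L (i + 1) = window x L (j + 1) ↔ window x (L + 1) i = window x (L + 1) j) := by
  -- both restriction maps are surjections between finite sets of the same size
  have hinj : ∀ f : (Fin (L + 1) → Λ) → (Fin L → Λ),
      Set.range (window x L) = f '' Set.range (window x (L + 1)) →
        Set.InjOn f (Set.range (window x (L + 1))) := fun f hf =>
    (Set.ncard_image_iff hfin).1 (hf ▸ hcard)
  refine ⟨⟨fun h => ?_, fun h => ?_⟩, ⟨fun h => ?_, fun h => ?_⟩⟩
  · refine hinj _ (range_window_eq_image_castSucc x L) ⟨i, rfl⟩ ⟨j, rfl⟩ ?_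
    simpa only [window_comp_castSucc] using h
  · simpa only [window_comp_castSucc] using congrArg (· ∘ Fin.castSucc) h
  · refine hinj _ (range_window_eq_image_succ x L) ⟨i, rfl⟩ ⟨j, rfl⟩ ?_
    simpa only [window_comp_succ] using h
  · simpa only [window_comp_succ] using congrArg (· ∘ Fin.succ) h

lemma not_aperiodic_of_ncard_range_window_eq (hfin : (Set.range (window x (L + 1))).Finite)
    (hcard : (Set.range (window x L)).ncard = (Set.range (window x (L + 1))).ncard) :
    ¬ Aperiodic x := by
  have hext := window_eq_iff_of_ncard_eq hfin hcard
  have : Finite (Set.range (window x (L + 1))) := hfin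
  obtain ⟨i, j, hij, hrep⟩ :=
    Finite.exists_ne_map_eq_of_infinite (Set.rangeFactorization (window x (L + 1)))
  have hrep : window x (L + 1) (i + (j - i)) = window x (L + 1) i := by
    rw [add_sub_cancel]; exact (congrArg Subtype.val hrep).symm
  have hper : Function.Periodic (window x (L + 1)) (j - i) :=
    Function.periodic_of_eq_iff_succ_eq
      (fun i j => (hext (i + 1) (j + 1)).1.symm.trans (hext i j).2) hrep
  intro hx
  exact hx.not_periodic (sub_ne_zero.2 hij.symm) fun s => by
    simpa [window] using congrFun (hper s) 0

end window

lemma Aperiodic.exists_le_encard_range_window {x : ℤ → Λ} (hx : Aperiodic x) (m : ℕ) :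
    ∃ L, (m : ℕ∞) ≤ (Set.range (window x L)).encard := by
  by_contra! hlt
  have hfin : ∀ L, (Set.range (window x L)).Finite := fun L =>
    Set.encard_lt_top_iff.1 ((hlt L).trans (ENat.natCast_lt_top m))
  have hmono : Monotone fun L => (Set.range (window x L)).ncard := monotone_nat_of_le_succ fun L => by
    rw [range_window_eq_image_castSucc x L]
    exact Set.ncard_image_le (hfin (L + 1))
  have hbound : ∀ L, (Set.range (window x L)).ncard < m := fun L => by
    exact_mod_cast (hfin L).cast_ncard_eq ▸ hlt L
  obtain ⟨L, hL⟩ := Nat.exists_eq_succ_of_monotone_of_lt hmono hbound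
  exact not_aperiodic_of_ncard_range_window_eq (hfin (L + 1)) hL hx

lemma Aperiodic.exists_finset_occurring_words {x : ℤ → Λ} (hx : Aperiodic x) (m : ℕ) :
    ∃ (S : Finset (List Λ)) (L : ℕ), S.card = m ∧
      ∀ a ∈ S, a.length = L ∧ ∃ i, OccursAt x a i := by
  obtain ⟨L, hL⟩ := hx.exists_le_encard_range_window m
  rw [← List.ofFn_injective.encard_image] at hL
  obtain ⟨t, hts, htm⟩ := Set.exists_subset_encard_eq hL
  have htfin : t.Finite := Set.finite_of_encard_eq_coe htm
  refine ⟨htfin.toFinset, L, by simpa [htfin.encard_eq_coe_toFinset_card] using htm, ?_⟩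
  intro a ha
  obtain ⟨_, ⟨i, rfl⟩, rfl⟩ := hts (htfin.mem_toFinset.1 ha)
  exact ⟨List.length_ofFn, i, occursAt_ofFn_window x L i⟩

section frequency

variable (x : ℤ → Λ)

lemma wordFreq_nonneg (a : List Λ) (N : ℕ) : 0 ≤ wordFreq x a N :=
  div_nonneg (Finset.sum_nonneg fun _ _ => by positivity) N.cast_nonneg

lemma eq_of_occursAt_of_length_eq {a b : List Λ} {i : ℤ} (ha : OccursAt x a i)
    (hb : OccursAt x b i) (hlen : a.length = b.length) : a = b :=
  List.ext_get hlen fun n h₁ h₂ => by rw [← ha ⟨n, h₁⟩, ← hb ⟨n, h₂⟩]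

variable {x}

lemma sum_wordFreq_le_one {S : Finset (List Λ)} {L : ℕ} (hS : ∀ a ∈ S, a.length = L) (N : ℕ) :
    ∑ a ∈ S, wordFreq x a N ≤ 1 := by
  have hocc_le_one : ∀ i : ℕ, (S.filter fun a => OccursAt x a i).card ≤ 1 := fun i =>
    Finset.card_le_one.2 fun a ha b hb => by
      rw [Finset.mem_filter] at ha hb
      exact eq_of_occursAt_of_length_eq x ha.2 hb.2 ((hS a ha.1).trans (hS b hb.1).symm)
  unfold wordFreq
  rw [← Finset.sum_div, Finset.sum_comm]
  refine div_le_one_of_le₀ ?_ N.cast_nonneg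
  calc ∑ i ∈ Finset.range N, ∑ a ∈ S, (if OccursAt x a i then (1 : ℝ) else 0)
      ≤ ∑ _i ∈ Finset.range N, (1 : ℝ) := Finset.sum_le_sum fun i _ => by
        rw [Finset.sum_boole]; exact_mod_cast hocc_le_one i
    _ = N := by simp

lemma exists_lowerWordFreq_le_inv_card {S : Finset (List Λ)} (hne : S.Nonempty) {L : ℕ}
    (hS : ∀ a ∈ S, a.length = L) : ∃ a ∈ S, lowerWordFreq x a ≤ (S.card : ℝ)⁻¹ := by
  by_contra! hgt
  have hev : ∀ᶠ N in atTop, ∀ a ∈ S, (S.card : ℝ)⁻¹ < wordFreq x a N :=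
    (eventually_all_finset S).2 fun a ha =>
      eventually_lt_of_lt_liminf (hgt a ha) (isBoundedUnder_of ⟨0, wordFreq_nonneg x a⟩)
  obtain ⟨N, hN⟩ := hev.exists
  have hcard : (0 : ℝ) < S.card := by exact_mod_cast hne.card_pos
  have hsum := calc (1 : ℝ) = ∑ _a ∈ S, (S.card : ℝ)⁻¹ := by simp [hcard.ne']
    _ < ∑ a ∈ S, wordFreq x a N := Finset.sum_lt_sum_of_nonempty hne hN
  exact hsum.not_ge (sum_wordFreq_le_one hS N)

end frequency

end

theorem low_frequency_word_exists_general {Λ : Type*} (x : ℤ → Λ)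
    (hx : Aperiodic x) (ε : ℝ) (hε : 0 < ε) :
    ∃ a : List Λ, (∃ i : ℤ, OccursAt x a i) ∧ lowerWordFreq x a < ε := by
  obtain ⟨m, hm⟩ := exists_nat_gt ε⁻¹
  have hm_pos : 0 < m := by exact_mod_cast (inv_pos.2 hε).trans hm
  obtain ⟨S, L, hcard, hS⟩ := hx.exists_finset_occurring_words m
  have hne : S.Nonempty := Finset.card_pos.1 (hcard ▸ hm_pos)
  obtain ⟨a, ha, hfreq⟩ := exists_lowerWordFreq_le_inv_card hne fun a ha => (hS a ha).1
  refine ⟨a, (hS a ha).2, hfreq.trans_lt ?_⟩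
  rw [hcard]
  exact inv_lt_of_inv_lt₀ hε hm

/-- **Low-frequency words exist.** If `x ∈ Λ^ℤ` is aperiodic (`Λ` a countable alphabet),
then for every `ε > 0` there is a finite word `a` occurring in `x` with `s̲(x,a) < ε`. -/
theorem low_frequency_word_exists {Λ : Type*} [Countable Λ] (x : ℤ → Λ)
    (hx : Aperiodic x) (ε : ℝ) (hε : 0 < ε) :
    ∃ a : List Λ, (∃ i : ℤ, OccursAt x a i) ∧ lowerWordFreq x a < ε :=
  low_frequency_word_exists_general x hx ε hε
end

section
/- Let Σ be a countable alphabet. There is a Borel measurable map assigning to each y ∈ Σ_AP^ℤ, each I ⊆ ℤ, and each sequence (t_n)_{n=1}^∞ of nonnegative reals with ∑_{n=1}^∞ t_n < 1, a sequence (J_n)_{n=1}^∞ of pairwise disjoint subsets of I satisfying s̲*(J_n) ≥ t_n·s̲*(I) for every n, such that the assignment is equivariant in the sense that (Sy, SI, (t_n)) is sent to (SJ_n)_{n=1}^∞. -/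
open Filter
open scoped Classical

def shiftSet (I : Set ℤ) : Set ℤ := {i | i + 1 ∈ I}

noncomputable def lowerUniformDensity (I : Set ℤ) : ℝ :=
  liminf (fun N : ℕ =>
    ⨅ n : ℤ, (∑ i ∈ Finset.range N, if n + (i : ℤ) ∈ I then (1 : ℝ) else 0) / N) atTop

/-!
For each scale `D`, a greedy choice among the countably many `D`-separated cylinders gives a Borel
set whose visit times `M` along the orbit of an aperiodic `y` are `D`-separated and meet every
interval of length `2D + 1`; being read off the orbit, they commute with the shift. Cutting `ℤ`
into blocks at the points of `M` and keeping the points of `A` at which `⌊β r⌋` jumps (`r` the rank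
of the point in its block) selects a `β`-proportion of `A` up to one point per block, hence up to
density `1 / (D + 1)`. Peeling pieces off `I` by this step, with ratios aimed at `t n · s̲*(I)` and
errors `(1 - ∑ t) s̲*(I) / 2 ^ (n + 1)` that add up to the slack `(1 - ∑ t) s̲*(I)`, gives the
sequence. Every choice is made by countably many Borel operations, which gives measurability.
-/

namespace StationarySelection

section Counting

open Finset

noncomputable def countIn (A : Set ℤ) (a b : ℤ) : ℕ := #{i ∈ Ico a b | i ∈ A}

variable {A B : Set ℤ}

@[simp] lemma countIn_self (A : Set ℤ) (a : ℤ) : countIn A a a = 0 := by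
  simp [countIn]

lemma countIn_add {a b c : ℤ} (hab : a ≤ b) (hbc : b ≤ c) :
    countIn A a c = countIn A a b + countIn A b c := by
  rw [countIn, countIn, countIn, ← Ico_union_Ico_eq_Ico hab hbc, filter_union,
    card_union_of_disjoint (disjoint_filter_filter (Ico_disjoint_Ico_consecutive a b c))]

lemma countIn_succ {a b : ℤ} (hab : a ≤ b) :
    (countIn A a (b + 1) : ℝ) = countIn A a b + if b ∈ A then 1 else 0 := by
  have hone : countIn A b (b + 1) = if b ∈ A then 1 else 0 := by
    have : Ico b (b + 1) = {b} := by ext; simp; omega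
    rw [countIn, this]
    split_ifs with h <;> simp [filter_singleton, h]
  rw [countIn_add hab (by omega : b ≤ b + 1), Nat.cast_add, hone]
  split_ifs <;> simp

lemma countIn_le_length (A : Set ℤ) (a : ℤ) (N : ℕ) : countIn A a (a + N) ≤ N :=
  (card_filter_le _ _).trans (by simp)

lemma countIn_sdiff_add (h : B ⊆ A) (a b : ℤ) :
    countIn (A \ B) a b + countIn B a b = countIn A a b := by
  rw [countIn, countIn, countIn, ← card_union_of_disjoint]
  · congr 1; ext i; simp only [mem_union, mem_filter, Set.mem_sdiff]; tauto
  refine disjoint_left.2 fun i h₁ h₂ => ?_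
  simp only [mem_filter, Set.mem_sdiff] at h₁ h₂
  exact h₁.2.2 h₂.2

lemma countIn_shiftSet (A : Set ℤ) (a b : ℤ) :
    countIn (shiftSet A) a b = countIn A (a + 1) (b + 1) := by
  refine card_bij' (fun i _ => i + 1) (fun j _ => j - 1) (fun i hi => ?_) (fun j hj => ?_)
    (fun _ _ => by ring) (fun _ _ => by ring)
  · simp only [mem_filter, mem_Ico] at hi ⊢; exact ⟨⟨by omega, by omega⟩, hi.2⟩
  · simp only [mem_filter, mem_Ico] at hj ⊢
    exact ⟨⟨by omega, by omega⟩, by simpa [shiftSet] using hj.2⟩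

lemma sum_indicator_range_eq_countIn (A : Set ℤ) (a : ℤ) (N : ℕ) :
    (∑ i ∈ range N, if a + (i : ℤ) ∈ A then (1 : ℝ) else 0) = countIn A a (a + N) := by
  induction N with
  | zero => simp
  | succ N ih => rw [sum_range_succ, ih, Nat.cast_succ, ← add_assoc, countIn_succ (by omega)]

end Counting

section Density

noncomputable def windowDensity (A : Set ℤ) (N : ℕ) : ℝ := ⨅ a : ℤ, (countIn A a (a + N) : ℝ) / N

variable {A B : Set ℤ}

lemma lowerUniformDensity_eq_liminf (A : Set ℤ) :
    lowerUniformDensity A = liminf (windowDensity A) atTop := by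
  simp only [lowerUniformDensity, sum_indicator_range_eq_countIn]
  rfl

lemma bddBelow_countIn_div (A : Set ℤ) (N : ℕ) :
    BddBelow (Set.range fun a : ℤ => (countIn A a (a + N) : ℝ) / N) :=
  ⟨0, Set.forall_mem_range.2 fun _ => by positivity⟩

lemma windowDensity_nonneg (A : Set ℤ) (N : ℕ) : 0 ≤ windowDensity A N :=
  le_ciInf fun _ => by positivity

lemma windowDensity_le_one (A : Set ℤ) (N : ℕ) : windowDensity A N ≤ 1 :=
  (ciInf_le (bddBelow_countIn_div A N) 0).trans
    (div_le_one_of_le₀ (by exact_mod_cast countIn_le_length A 0 N) N.cast_nonneg)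

lemma isBoundedUnder_ge_windowDensity (A : Set ℤ) :
    IsBoundedUnder (· ≥ ·) atTop (windowDensity A) :=
  isBoundedUnder_of ⟨0, windowDensity_nonneg A⟩

lemma isCoboundedUnder_ge_windowDensity (A : Set ℤ) :
    IsCoboundedUnder (· ≥ ·) atTop (windowDensity A) :=
  (isBoundedUnder_of ⟨1, windowDensity_le_one A⟩).isCoboundedUnder_ge

lemma lowerUniformDensity_nonneg (A : Set ℤ) : 0 ≤ lowerUniformDensity A := by
  rw [lowerUniformDensity_eq_liminf]
  exact le_liminf_of_le (isCoboundedUnder_ge_windowDensity A)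
    (Eventually.of_forall (windowDensity_nonneg A))

lemma lowerUniformDensity_shiftSet (A : Set ℤ) :
    lowerUniformDensity (shiftSet A) = lowerUniformDensity A := by
  rw [lowerUniformDensity_eq_liminf, lowerUniformDensity_eq_liminf]
  congr 1
  funext N
  simp only [windowDensity, countIn_shiftSet]
  exact (Equiv.addRight 1).iInf_congr fun a => by simp [add_right_comm]

lemma mul_lowerUniformDensity_le {γ ε C : ℝ} (hγ : 0 ≤ γ)
    (h : ∀ (a : ℤ) (N : ℕ), γ * countIn B a (a + N) ≤ countIn A a (a + N) + ε * N + C) :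
    γ * lowerUniformDensity B ≤ lowerUniformDensity A + ε := by
  rw [lowerUniformDensity_eq_liminf, lowerUniformDensity_eq_liminf]
  refine le_of_forall_pos_le_add fun δ hδ => ?_
  have hwindow : ∀ᶠ N in atTop, γ * windowDensity B N - ε - δ ≤ windowDensity A N := by
    obtain ⟨N₀, hN₀⟩ := exists_nat_gt (C / δ)
    filter_upwards [eventually_gt_atTop N₀] with N hN
    have hNpos : (0 : ℝ) < N := by exact_mod_cast N₀.zero_le.trans_lt hN
    have hCN : C ≤ δ * N := by
      rw [div_lt_iff₀ hδ] at hN₀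
      nlinarith [show (N₀ : ℝ) < N by exact_mod_cast hN]
    refine le_ciInf fun a => ?_
    have hB : windowDensity B N * N ≤ countIn B a (a + N) :=
      (le_div_iff₀ hNpos).1 (ciInf_le (bddBelow_countIn_div B N) a)
    rw [le_div_iff₀ hNpos]
    nlinarith [h a N, mul_le_mul_of_nonneg_left hB hγ]
  have hlower : IsBoundedUnder (· ≥ ·) atTop fun N => γ * windowDensity B N - ε - δ :=
    isBoundedUnder_of ⟨-ε - δ, fun N => by nlinarith [windowDensity_nonneg B N]⟩
  have hmono : Monotone fun x : ℝ => γ * x - ε - δ := fun x y hxy => by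
    simp only; nlinarith
  have hmap := hmono.map_liminf_of_continuousAt (windowDensity B) (by fun_prop)
    (isCoboundedUnder_ge_windowDensity B) (isBoundedUnder_ge_windowDensity B)
  have := liminf_le_liminf hwindow hlower (isCoboundedUnder_ge_windowDensity A)
  rw [Function.comp_def] at hmap
  linarith

end Density

section Selection

/-- `m` is the start of the block of `i` when `ℤ` is cut at the points of `M`, and `i ∈ A` is
selected iff `⌊β r⌋` jumps at its rank `r` in the block, so that an initial segment of a block
containing `r` points of `A` contains `⌊β r⌋` selected points. -/
def select (M A : Set ℤ) (β : ℝ) : Set ℤ :=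
  {i | i ∈ A ∧ ∃ m, IsGreatest {j | j ∈ M ∧ j ≤ i} m ∧
    ⌊β * countIn A m i⌋ < ⌊β * (countIn A m i + 1)⌋}

variable {M A : Set ℤ} {β : ℝ}

lemma select_subset : select M A β ⊆ A := fun _ hi => hi.1

lemma mem_select_iff {i m : ℤ} (hm : IsGreatest {j | j ∈ M ∧ j ≤ i} m) :
    i ∈ select M A β ↔ i ∈ A ∧ ⌊β * countIn A m i⌋ < ⌊β * (countIn A m i + 1)⌋ :=
  and_congr_right fun _ => ⟨fun ⟨_, hm', h⟩ => hm'.unique hm ▸ h, fun h => ⟨m, hm, h⟩⟩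

lemma isGreatest_shiftSet_iff {i m : ℤ} :
    IsGreatest {j | j ∈ shiftSet M ∧ j ≤ i} m ↔ IsGreatest {j | j ∈ M ∧ j ≤ i + 1} (m + 1) := by
  simp only [IsGreatest, upperBounds, shiftSet, Set.mem_ofPred_eq]
  constructor
  · rintro ⟨⟨hm, hmi⟩, h⟩
    refine ⟨⟨hm, by omega⟩, fun j hj => ?_⟩
    have := @h (j - 1) ⟨by simpa using hj.1, by omega⟩
    omega
  · rintro ⟨⟨hm, hmi⟩, h⟩
    exact ⟨⟨hm, by omega⟩, fun j hj => by have := @h (j + 1) ⟨hj.1, by omega⟩; omega⟩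

lemma select_shiftSet (M A : Set ℤ) (β : ℝ) :
    select (shiftSet M) (shiftSet A) β = shiftSet (select M A β) := by
  ext i
  refine and_congr_right fun _ => (Equiv.addRight (1 : ℤ)).exists_congr fun m => ?_
  simp only [Equiv.coe_addRight, isGreatest_shiftSet_iff, countIn_shiftSet]

lemma indicator_select_sub {i m : ℤ} (hm : IsGreatest {j | j ∈ M ∧ j ≤ i} m)
    (hβ0 : 0 ≤ β) (hβ1 : β ≤ 1) :
    ((if i ∈ select M A β then 1 else 0 : ℝ) - β * if i ∈ A then 1 else 0) =
      Int.fract (β * countIn A m i) - Int.fract (β * (countIn A m i + if i ∈ A then 1 else 0)) := by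
  rw [mem_select_iff hm]
  set r : ℝ := (countIn A m i : ℝ)
  simp only [Int.fract]
  by_cases hA : i ∈ A
  · have hmono : ⌊β * r⌋ ≤ ⌊β * (r + 1)⌋ := Int.floor_mono (by nlinarith)
    have hstep : ⌊β * (r + 1)⌋ ≤ ⌊β * r⌋ + 1 := by
      rw [← Int.floor_add_one]; exact Int.floor_mono (by nlinarith)
    by_cases hlt : ⌊β * r⌋ < ⌊β * (r + 1)⌋
    · rw [if_pos ⟨hA, hlt⟩, if_pos hA, show ⌊β * (r + 1)⌋ = ⌊β * r⌋ + 1 by omega]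
      push_cast; ring
    · rw [if_neg fun h => hlt h.2, if_pos hA, show ⌊β * (r + 1)⌋ = ⌊β * r⌋ by omega]
      ring
  · simp [hA]

lemma select_telescoping_step {i m m' : ℤ} (hm : IsGreatest {j | j ∈ M ∧ j ≤ i} m)
    (hm' : IsGreatest {j | j ∈ M ∧ j ≤ i + 1} m') (hβ0 : 0 ≤ β) (hβ1 : β ≤ 1) :
    ((if i ∈ select M A β then 1 else 0) - β * if i ∈ A then 1 else 0) -
        (Int.fract (β * countIn A m i) - Int.fract (β * countIn A m' (i + 1))) ∈
      Set.Icc (-(if i + 1 ∈ M then 1 else 0 : ℝ)) 0 := by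
  rw [indicator_select_sub hm hβ0 hβ1, Set.mem_Icc]
  by_cases h : i + 1 ∈ M
  · obtain rfl : m' = i + 1 := hm'.unique ⟨⟨h, le_rfl⟩, fun _ hj => hj.2⟩
    have := Int.fract_nonneg (β * (countIn A m i + if i ∈ A then 1 else 0))
    have := Int.fract_lt_one (β * (countIn A m i + if i ∈ A then 1 else 0))
    simp only [h, if_true, countIn_self, Nat.cast_zero, mul_zero, Int.fract_zero]
    constructor <;> linarith
  · have hsame : IsGreatest {j | j ∈ M ∧ j ≤ i + 1} m :=
      ⟨⟨hm.1.1, by linarith [hm.1.2]⟩, fun j hj =>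
        hm.2 ⟨hj.1, (Int.le_add_one_iff.1 hj.2).resolve_right fun e => h (e ▸ hj.1)⟩⟩
    obtain rfl := hm'.unique hsame
    rw [countIn_succ hm.1.2]
    simp [h]

lemma exists_isGreatest_of_exists_le (M : Set ℤ) {i : ℤ} (h : ∃ m ∈ M, m ≤ i) :
    ∃ m, IsGreatest {j | j ∈ M ∧ j ≤ i} m := by
  obtain ⟨m, hm, hm'⟩ := Int.exists_greatest_of_bdd ⟨i, fun _ hj => hj.2⟩ h
  exact ⟨m, hm, hm'⟩

/-- Telescoping the potential `Int.fract (β r)` (with `r` the rank in the current block) through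
`select_telescoping_step`, the selection errs by less than one per block boundary inside the window. -/
lemma abs_countIn_select_sub_le (hM : ∀ i, ∃ m ∈ M, m ≤ i) (hβ0 : 0 ≤ β) (hβ1 : β ≤ 1)
    (a : ℤ) (N : ℕ) :
    |(countIn (select M A β) a (a + N) : ℝ) - β * countIn A a (a + N)| ≤
      countIn M (a + 1) (a + N + 1) + 1 := by
  choose b hb using fun i => exists_isGreatest_of_exists_le M (hM i)
  obtain ⟨Φ, hΦ⟩ : ∃ Φ : ℤ → ℝ, ∀ i, Φ i = Int.fract (β * countIn A (b i) i) := ⟨_, fun _ => rfl⟩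
  have htelescope : ∀ n : ℕ,
      -(countIn M (a + 1) (a + n + 1) : ℝ) ≤
          (countIn (select M A β) a (a + n) - β * countIn A a (a + n)) - (Φ a - Φ (a + n)) ∧
        (countIn (select M A β) a (a + n) - β * countIn A a (a + n)) - (Φ a - Φ (a + n)) ≤ 0 := by
    intro n
    induction n with
    | zero => simp
    | succ n ih =>
      have hstep := select_telescoping_step (A := A) (hb (a + n)) (hb (a + n + 1)) hβ0 hβ1
      rw [← hΦ, ← hΦ] at hstep
      rw [Nat.cast_succ, ← add_assoc, countIn_succ (A := select M A β) (by omega : a ≤ a + n),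
        countIn_succ (A := A) (by omega : a ≤ a + n), countIn_succ (by omega : a + 1 ≤ a + n + 1)]
      constructor <;> linarith [ih.1, ih.2, hstep.1, hstep.2]
  obtain ⟨hlow, hupp⟩ := htelescope N
  have := (hΦ a).symm ▸ Int.fract_nonneg (β * countIn A (b a) a)
  have := (hΦ a).symm ▸ Int.fract_lt_one (β * countIn A (b a) a)
  have := (hΦ (a + N)).symm ▸ Int.fract_nonneg (β * countIn A (b (a + N)) (a + N))
  have := (hΦ (a + N)).symm ▸ Int.fract_lt_one (β * countIn A (b (a + N)) (a + N))
  rw [abs_le]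
  constructor <;> linarith

lemma countIn_le_of_pairwise {D : ℕ} (hM : M.Pairwise fun a b => (D : ℤ) < |a - b|)
    (a : ℤ) (N : ℕ) : (countIn M a (a + N) : ℝ) ≤ N / (D + 1) + 1 := by
  have hcard : countIn M a (a + N) ≤ N / (D + 1) + 1 := by
    rw [← Finset.card_range (N / (D + 1) + 1)]
    -- distinct points of `M` lie in distinct blocks `[a + q (D + 1), a + (q + 1) (D + 1))`
    refine Finset.card_le_card_of_injOn (fun x => (x - a).toNat / (D + 1)) (fun x hx => ?_)
      fun x hx z hz hxz => ?_
    · simp only [Finset.coe_filter, Finset.mem_Ico, Set.mem_ofPred_eq] at hx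
      simp only [Finset.coe_range, Set.mem_Iio]
      exact Nat.lt_succ_of_le (Nat.div_le_div_right (by omega))
    · simp only [Finset.coe_filter, Finset.mem_Ico, Set.mem_ofPred_eq] at hx hz
      by_contra hne
      have hsep : (D : ℤ) < |x - z| := hM hx.2 hz.2 hne
      rw [lt_abs] at hsep
      have h1 := Nat.div_add_mod (x - a).toNat (D + 1)
      have h2 := Nat.div_add_mod (z - a).toNat (D + 1)
      have h3 := Nat.mod_lt (x - a).toNat (by omega : 0 < D + 1)
      have h4 := Nat.mod_lt (z - a).toNat (by omega : 0 < D + 1)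
      simp only at hxz
      rw [hxz] at h1
      omega
  calc (countIn M a (a + N) : ℝ) ≤ ((N / (D + 1) + 1 : ℕ) : ℝ) := by exact_mod_cast hcard
    _ ≤ N / (D + 1) + 1 := by
      push_cast
      gcongr
      exact_mod_cast Nat.cast_div_le (α := ℝ) (m := N) (n := D + 1)

def IsMarkerSet (D : ℕ) (M : Set ℤ) : Prop :=
  M.Pairwise (fun a b => (D : ℤ) < |a - b|) ∧ ∀ i, ∃ m ∈ M, m ≤ i

variable {D : ℕ}

lemma abs_countIn_select_sub_le_of_isMarkerSet (hM : IsMarkerSet D M) (hβ0 : 0 ≤ β)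
    (hβ1 : β ≤ 1) (a : ℤ) (N : ℕ) :
    |(countIn (select M A β) a (a + N) : ℝ) - β * countIn A a (a + N)| ≤ N / (D + 1) + 2 := by
  have := countIn_le_of_pairwise hM.1 (a + 1) N
  rw [add_right_comm] at this
  linarith [abs_countIn_select_sub_le (A := A) hM.2 hβ0 hβ1 a N]

lemma mul_lowerUniformDensity_le_select (hM : IsMarkerSet D M) (hβ0 : 0 ≤ β) (hβ1 : β ≤ 1) :
    β * lowerUniformDensity A ≤ lowerUniformDensity (select M A β) + 1 / (D + 1) :=
  mul_lowerUniformDensity_le (C := 2) hβ0 fun a N => by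
    have : (N : ℝ) / (D + 1) = 1 / (D + 1) * N := by ring
    linarith [(abs_le.1 (abs_countIn_select_sub_le_of_isMarkerSet (A := A) hM hβ0 hβ1 a N)).1]

lemma mul_lowerUniformDensity_le_sdiff_select (hM : IsMarkerSet D M) (hβ0 : 0 ≤ β)
    (hβ1 : β ≤ 1) :
    (1 - β) * lowerUniformDensity A ≤ lowerUniformDensity (A \ select M A β) + 1 / (D + 1) :=
  mul_lowerUniformDensity_le (C := 2) (by linarith) fun a N => by
    have hsplit : (countIn (A \ select M A β) a (a + N) : ℝ) + countIn (select M A β) a (a + N) =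
        countIn A a (a + N) := by exact_mod_cast countIn_sdiff_add select_subset a (a + N)
    have : (N : ℝ) / (D + 1) = 1 / (D + 1) * N := by ring
    linarith [(abs_le.1 (abs_countIn_select_sub_le_of_isMarkerSet (A := A) hM hβ0 hβ1 a N)).2]

lemma one_div_natCeil_inv_add_one_le {ε : ℝ} (hε : 0 < ε) : 1 / ((⌈ε⁻¹⌉₊ : ℝ) + 1) ≤ ε := by
  rw [div_le_iff₀ (by positivity)]
  nlinarith [Nat.le_ceil ε⁻¹, mul_inv_cancel₀ hε.ne']

lemma lowerUniformDensity_select_bounds {τ ε : ℝ} (hM : IsMarkerSet ⌈ε⁻¹⌉₊ M) (hτ : 0 ≤ τ)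
    (hε : 0 < ε) (hA : τ + ε ≤ lowerUniformDensity A) :
    τ ≤ lowerUniformDensity (select M A ((τ + ε) / lowerUniformDensity A)) ∧
      lowerUniformDensity A - τ - 2 * ε ≤
        lowerUniformDensity (A \ select M A ((τ + ε) / lowerUniformDensity A)) := by
  have hpos : 0 < lowerUniformDensity A := by linarith
  have hβ0 : 0 ≤ (τ + ε) / lowerUniformDensity A := by positivity
  have hβ1 : (τ + ε) / lowerUniformDensity A ≤ 1 := (div_le_one hpos).2 hA
  have hβ : (τ + ε) / lowerUniformDensity A * lowerUniformDensity A = τ + ε :=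
    div_mul_cancel₀ _ hpos.ne'
  have hD := one_div_natCeil_inv_add_one_le hε
  constructor
  · linarith [mul_lowerUniformDensity_le_select (A := A) hM hβ0 hβ1]
  · linarith [mul_lowerUniformDensity_le_sdiff_select (A := A) hM hβ0 hβ1]

end Selection

section Measurability

variable {X : Type*} [MeasurableSpace X] {M A : X → Set ℤ}

lemma measurable_countIn (hA : Measurable A) (a b : ℤ) :
    Measurable fun x => countIn (A x) a b := by
  simp only [countIn, Finset.card_filter]
  refine Finset.measurable_sum _ fun i _ => Measurable.ite ?_ measurable_const measurable_const
  exact measurableSet_setOfPred.2 ((measurable_set_mem i).comp hA)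

lemma measurable_lowerUniformDensity (hA : Measurable A) :
    Measurable fun x => lowerUniformDensity (A x) := by
  have := measurable_countIn hA
  simp only [lowerUniformDensity, sum_indicator_range_eq_countIn]
  exact Measurable.liminf fun N => Measurable.iInf fun a => by fun_prop

lemma measurable_select {β : X → ℝ} (hM : Measurable M) (hA : Measurable A) (hβ : Measurable β) :
    Measurable fun x => select (M x) (A x) (β x) := by
  refine measurable_set_iff.2 fun i => ?_
  simp only [select, Set.mem_ofPred_eq, IsGreatest, upperBounds]
  have := fun m => measurable_countIn hA m i
  fun_prop

end Measurability

section Markers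

variable {Λ : Type*}

def shiftBy (j : ℤ) (y : ℤ → Λ) : ℤ → Λ := fun i => y (i + j)

lemma shiftBy_shiftBy (a b : ℤ) (y : ℤ → Λ) : shiftBy a (shiftBy b y) = shiftBy (a + b) y := by
  funext i; simp only [shiftBy, add_assoc]

@[simp] lemma shiftBy_zero (y : ℤ → Λ) : shiftBy 0 y = y := by
  funext i; simp [shiftBy]

lemma aperiodic_shiftBy {y : ℤ → Λ} (hy : Aperiodic y) (j : ℤ) : Aperiodic (shiftBy j y) :=
  fun p hp hper => hy p hp <| by
    funext i
    simpa [shiftBy, add_right_comm] using congrFun hper (i - j)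

def hits (B : Set (ℤ → Λ)) (y : ℤ → Λ) : Set ℤ := {k | shiftBy k y ∈ B}

lemma hits_shift (B : Set (ℤ → Λ)) (y : ℤ → Λ) : hits B (shift y) = shiftSet (hits B y) := by
  ext k
  exact iff_of_eq (congrArg (· ∈ B) (shiftBy_shiftBy k 1 y))

def shiftNbhd (D : ℕ) (U : Set (ℤ → Λ)) : Set (ℤ → Λ) := {z | ∃ j : ℤ, |j| ≤ D ∧ shiftBy j z ∈ U}

def IsSeparated (D : ℕ) (B : Set (ℤ → Λ)) : Prop :=
  ∀ z ∈ B, ∀ p : ℕ, 1 ≤ p → p ≤ D → shiftBy p z ∉ B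

lemma IsSeparated.pairwise_hits {D : ℕ} {B : Set (ℤ → Λ)} (hB : IsSeparated D B) (y : ℤ → Λ) :
    (hits B y).Pairwise fun a b => (D : ℤ) < |a - b| := by
  have key : ∀ a ∈ hits B y, ∀ b ∈ hits B y, a < b → (D : ℤ) < b - a := fun a ha b hb hab => by
    by_contra hle
    refine hB _ ha (b - a).toNat (by omega) (by omega) ?_
    rwa [shiftBy_shiftBy, show ((b - a).toNat : ℤ) + a = b by omega]
  intro a ha b hb hne
  rcases hne.lt_or_gt with h | h
  · rw [abs_sub_comm, abs_of_pos (sub_pos.2 h)]; exact key a ha b hb h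
  · rw [abs_of_pos (sub_pos.2 h)]; exact key b hb a ha h

def greedy (D : ℕ) (B : ℕ → Set (ℤ → Λ)) : ℕ → Set (ℤ → Λ)
  | 0 => ∅
  | k + 1 => greedy D B k ∪ (B k \ shiftNbhd D (greedy D B k))

variable {D : ℕ} {B : ℕ → Set (ℤ → Λ)}

lemma greedy_mono : Monotone (greedy D B) :=
  monotone_nat_of_le_succ fun _ => Set.subset_union_left

lemma isSeparated_greedy (hB : ∀ k, IsSeparated D (B k)) (k : ℕ) :
    IsSeparated D (greedy D B k) := by
  induction k with
  | zero => exact fun _ h => h.elim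
  | succ k ih =>
    rintro z hz p hp1 hpD hzp
    have hpD' : |(p : ℤ)| ≤ D := by rw [abs_of_nonneg (by omega)]; exact_mod_cast hpD
    rcases hz with hz | hz <;> rcases hzp with hzp | hzp
    · exact ih z hz p hp1 hpD hzp
    · refine hzp.2 ⟨-p, by rwa [abs_neg], ?_⟩
      rwa [shiftBy_shiftBy, neg_add_cancel, shiftBy_zero]
    · exact hz.2 ⟨p, hpD', hzp⟩
    · exact hB k z hz.1 p hp1 hpD hzp.1

lemma isSeparated_iUnion_greedy (hB : ∀ k, IsSeparated D (B k)) :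
    IsSeparated D (⋃ k, greedy D B k) := by
  rintro z hz p hp1 hpD hzp
  obtain ⟨k, hk⟩ := Set.mem_iUnion.1 hz
  obtain ⟨l, hl⟩ := Set.mem_iUnion.1 hzp
  exact isSeparated_greedy hB (max k l) z (greedy_mono (le_max_left k l) hk) p hp1 hpD
    (greedy_mono (le_max_right k l) hl)

lemma iUnion_subset_shiftNbhd_iUnion_greedy :
    ⋃ k, B k ⊆ shiftNbhd D (⋃ k, greedy D B k) := by
  intro z hz
  obtain ⟨k, hk⟩ := Set.mem_iUnion.1 hz
  by_cases hnear : z ∈ shiftNbhd D (greedy D B k)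
  · obtain ⟨j, hj, hjz⟩ := hnear
    exact ⟨j, hj, Set.mem_iUnion.2 ⟨k, hjz⟩⟩
  · exact ⟨0, by simp, Set.mem_iUnion.2 ⟨k + 1, by rw [shiftBy_zero]; exact Or.inr ⟨hk, hnear⟩⟩⟩

def cylinder (c : ℤ × List Λ) : Set (ℤ → Λ) :=
  {z | ∀ (i : ℕ) (hi : i < c.2.length), z (c.1 + i) = c.2[i]}

def window (y : ℤ → Λ) (R : ℕ) : ℤ × List Λ := (-R, List.ofFn fun i : Fin (2 * R + 1) => y (-R + i))

lemma mem_cylinder_window (y : ℤ → Λ) (R : ℕ) : y ∈ cylinder (window y R) := by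
  intro i hi
  simp only [window, List.getElem_ofFn]

lemma eq_of_mem_cylinder_window {y z : ℤ → Λ} {R : ℕ} (hz : z ∈ cylinder (window y R)) {j : ℤ}
    (hj : -R ≤ j) (hj' : j ≤ R) : z j = y j := by
  have := hz (j + R).toNat (by simp [window]; omega)
  simp only [window, List.getElem_ofFn] at this
  rwa [show -(R : ℤ) + ((j + R).toNat : ℕ) = j by omega] at this

lemma exists_separating_radius {y : ℤ → Λ} (hy : Aperiodic y) (D : ℕ) :
    ∃ R : ℕ, ∀ p : ℕ, 1 ≤ p → p ≤ D → ∃ b : ℤ, -R ≤ b ∧ b + p ≤ R ∧ y (b + p) ≠ y b := by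
  induction D with
  | zero => exact ⟨0, fun p h1 h2 => by omega⟩
  | succ D ih =>
    obtain ⟨R, hR⟩ := ih
    obtain ⟨b, hb⟩ := Function.ne_iff.1 (hy (D + 1) (by omega))
    refine ⟨R + b.natAbs + D + 1, fun p hp1 hpD => ?_⟩
    rcases Nat.lt_or_ge p (D + 1) with hp | hp
    · obtain ⟨b', hb'⟩ := hR p hp1 (by omega)
      exact ⟨b', by omega, by omega, hb'.2.2⟩
    · obtain rfl : p = D + 1 := by omega
      exact ⟨b, by omega, by omega, hb⟩

lemma exists_isSeparated_cylinder {y : ℤ → Λ} (hy : Aperiodic y) (D : ℕ) :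
    ∃ c, IsSeparated D (cylinder c) ∧ y ∈ cylinder c := by
  obtain ⟨R, hR⟩ := exists_separating_radius hy D
  refine ⟨window y R, fun z hz p hp1 hpD hzp => ?_, mem_cylinder_window y R⟩
  obtain ⟨b, hb1, hb2, hb⟩ := hR p hp1 hpD
  apply hb
  rw [← eq_of_mem_cylinder_window hz (by omega) hb2,
    ← eq_of_mem_cylinder_window hzp (by omega) (by omega)]
  rfl

end Markers

section MarkerSets

variable {Λ : Type*} [Countable Λ]

noncomputable def cylinderEnum : ℕ → ℤ × List Λ := (exists_surjective_nat _).choose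

lemma cylinderEnum_surjective : Function.Surjective (cylinderEnum (Λ := Λ)) :=
  (exists_surjective_nat _).choose_spec

def separatedCylinder (D k : ℕ) : Set (ℤ → Λ) :=
  if IsSeparated D (cylinder (cylinderEnum (Λ := Λ) k)) then cylinder (cylinderEnum k) else ∅

lemma isSeparated_separatedCylinder (D k : ℕ) : IsSeparated D (separatedCylinder (Λ := Λ) D k) := by
  unfold separatedCylinder
  split_ifs with h
  · exact h
  · exact fun _ h => h.elim

def markerBase (D : ℕ) : Set (ℤ → Λ) := ⋃ k, greedy D (separatedCylinder D) k

def markers (D : ℕ) (y : ℤ → Λ) : Set ℤ := hits (markerBase D) y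

lemma mem_shiftNbhd_markerBase {y : ℤ → Λ} (hy : Aperiodic y) (D : ℕ) :
    y ∈ shiftNbhd D (markerBase D) := by
  obtain ⟨c, hc, hyc⟩ := exists_isSeparated_cylinder hy D
  obtain ⟨k, rfl⟩ := cylinderEnum_surjective c
  refine iUnion_subset_shiftNbhd_iUnion_greedy (Set.mem_iUnion.2 ⟨k, ?_⟩)
  rwa [separatedCylinder, if_pos hc]

lemma isMarkerSet_markers {y : ℤ → Λ} (hy : Aperiodic y) (D : ℕ) :
    IsMarkerSet D (markers D y) := by
  refine ⟨(isSeparated_iUnion_greedy (isSeparated_separatedCylinder D)).pairwise_hits y,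
    fun i => ?_⟩
  obtain ⟨j, hj, hjy⟩ := mem_shiftNbhd_markerBase (aperiodic_shiftBy hy (i - D)) D
  refine ⟨j + (i - D), by rwa [markers, hits, Set.mem_ofPred_eq, ← shiftBy_shiftBy], ?_⟩
  linarith [(abs_le.1 hj).2]

lemma markers_shift (D : ℕ) (y : ℤ → Λ) : markers D (shift y) = shiftSet (markers D y) :=
  hits_shift _ y

end MarkerSets

section MarkerMeasurability

variable {Λ : Type*} [MeasurableSpace Λ]

lemma measurable_shiftBy (j : ℤ) : Measurable (shiftBy (Λ := Λ) j) :=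
  measurable_pi_lambda _ fun _ => measurable_pi_apply _

lemma measurable_hits {B : Set (ℤ → Λ)} (hB : MeasurableSet B) : Measurable (hits B) :=
  measurable_set_iff.2 fun k => measurableSet_setOfPred.1 (measurable_shiftBy k hB)

lemma measurableSet_shiftNbhd (D : ℕ) {U : Set (ℤ → Λ)} (hU : MeasurableSet U) :
    MeasurableSet (shiftNbhd D U) := by
  have := fun j => measurableSet_setOfPred.1 (measurable_shiftBy (Λ := Λ) j hU)
  exact measurableSet_setOfPred.2 (by fun_prop)

lemma measurableSet_greedy (D : ℕ) {B : ℕ → Set (ℤ → Λ)} (hB : ∀ k, MeasurableSet (B k)) :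
    ∀ k, MeasurableSet (greedy D B k)
  | 0 => .empty
  | k + 1 => (measurableSet_greedy D hB k).union
      ((hB k).diff (measurableSet_shiftNbhd D (measurableSet_greedy D hB k)))

variable [DiscreteMeasurableSpace Λ]

lemma measurableSet_cylinder (c : ℤ × List Λ) : MeasurableSet (cylinder c) := by
  simp only [cylinder, Set.ofPred_forall]
  exact .iInter fun i => .iInter fun _ => measurable_pi_apply (c.1 + i) (measurableSet_singleton _)

variable [Countable Λ]

lemma measurableSet_markerBase (D : ℕ) : MeasurableSet (markerBase (Λ := Λ) D) := by
  refine .iUnion (measurableSet_greedy D fun k => ?_)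
  unfold separatedCylinder
  split_ifs
  exacts [measurableSet_cylinder _, .empty]

lemma measurable_markers {X : Type*} [MeasurableSpace X] {D : X → ℕ} {y : X → ℤ → Λ}
    (hD : Measurable D) (hy : Measurable y) : Measurable fun x => markers (D x) (y x) := by
  have : Measurable fun q : ℕ × (ℤ → Λ) => markers q.1 q.2 :=
    measurable_from_prod_countable_right fun D => measurable_hits (measurableSet_markerBase D)
  exact this.comp (hD.prodMk hy)

end MarkerMeasurability

section Peeling

variable {α : Type*} (f : ℕ → Set α → Set α) (I : Set α)

def remainder : ℕ → Set α
  | 0 => I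
  | n + 1 => remainder n \ f n (remainder n)

def piece (n : ℕ) : Set α := f n (remainder f I n)

variable {f I}

lemma remainder_antitone : Antitone (remainder f I) :=
  antitone_nat_of_succ_le fun _ => Set.sdiff_subset

lemma piece_subset (hf : ∀ n A, f n A ⊆ A) (n : ℕ) : piece f I n ⊆ I :=
  (hf _ _).trans (remainder_antitone n.zero_le)

lemma pairwise_disjoint_piece (hf : ∀ n A, f n A ⊆ A) :
    Pairwise fun m n => Disjoint (piece f I m) (piece f I n) :=
  (pairwise_disjoint_on _).2 fun _ _ hmn =>
    Set.disjoint_of_subset_right ((hf _ _).trans (remainder_antitone hmn.nat_succ_le))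
      Set.disjoint_sdiff_right

lemma remainder_preimage {f' : ℕ → Set α → Set α} {g : α → α}
    (h : ∀ n A, f' n (g ⁻¹' A) = g ⁻¹' f n A) (n : ℕ) :
    remainder f' (g ⁻¹' I) n = g ⁻¹' remainder f I n := by
  induction n with
  | zero => rfl
  | succ n ih => simp only [remainder, ih, h, Set.preimage_sdiff]

lemma piece_preimage {f' : ℕ → Set α → Set α} {g : α → α}
    (h : ∀ n A, f' n (g ⁻¹' A) = g ⁻¹' f n A) (n : ℕ) :
    piece f' (g ⁻¹' I) n = g ⁻¹' piece f I n := by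
  rw [piece, remainder_preimage h, h, piece]

lemma measurable_remainder {X : Type*} [MeasurableSpace X] {f : X → ℕ → Set α → Set α}
    {I : X → Set α} (hI : Measurable I)
    (hf : ∀ n (A : X → Set α), Measurable A → Measurable fun x => f x n (A x)) (n : ℕ) :
    Measurable fun x => remainder (f x) (I x) n := by
  induction n with
  | zero => exact hI
  | succ n ih =>
    refine measurable_set_iff.2 fun a => ?_
    have h₁ := measurable_set_iff.1 ih a
    have h₂ := measurable_set_iff.1 (hf n _ ih) a
    simp only [remainder, Set.mem_sdiff]
    fun_prop

lemma measurable_piece {X : Type*} [MeasurableSpace X] {f : X → ℕ → Set α → Set α}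
    {I : X → Set α} (hI : Measurable I)
    (hf : ∀ n (A : X → Set α), Measurable A → Measurable fun x => f x n (A x)) (n : ℕ) :
    Measurable fun x => piece (f x) (I x) n :=
  hf n _ (measurable_remainder hI hf n)

end Peeling

section Iteration

open Finset

/-- A stand-in for `∑ t` built from countably many partial sums, hence measurable in `t`. -/
noncomputable def partialSumSup (t : ℕ → ℝ) : ℝ := ⨆ N, ∑ j ∈ range N, t j

lemma sum_range_le_partialSumSup {t : ℕ → ℝ} {c : ℝ} (ht0 : ∀ n, 0 ≤ t n) (hsum : HasSum t c)
    (N : ℕ) : ∑ j ∈ range N, t j ≤ partialSumSup t :=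
  le_ciSup ⟨c, Set.forall_mem_range.2 fun _ => sum_le_hasSum _ (fun j _ => ht0 j) hsum⟩ N

lemma partialSumSup_le {t : ℕ → ℝ} {c : ℝ} (ht0 : ∀ n, 0 ≤ t n) (hsum : HasSum t c) :
    partialSumSup t ≤ c :=
  ciSup_le fun _ => sum_le_hasSum _ (fun j _ => ht0 j) hsum

/-- Step `n` may lose `2 · stepError I t n`; what is left of the slack `(1 - ∑ t) s̲*(I)` after
`n` steps is `4 · stepError I t n`. -/
noncomputable def stepError (I : Set ℤ) (t : ℕ → ℝ) (n : ℕ) : ℝ :=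
  (1 - partialSumSup t) * lowerUniformDensity I / 2 ^ (n + 2)

lemma stepError_pos {I : Set ℤ} {t : ℕ → ℝ} (hc : partialSumSup t < 1)
    (hs : 0 < lowerUniformDensity I) (n : ℕ) : 0 < stepError I t n := by
  have := sub_pos.2 hc
  unfold stepError
  positivity

variable {Λ : Type*} [Countable Λ]

noncomputable def selectionStep (y : ℤ → Λ) (I : Set ℤ) (t : ℕ → ℝ) (n : ℕ) (A : Set ℤ) :
    Set ℤ :=
  select (markers ⌈(stepError I t n)⁻¹⌉₊ y) A
    ((t n * lowerUniformDensity I + stepError I t n) / lowerUniformDensity A)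

lemma selectionStep_subset (y : ℤ → Λ) (I : Set ℤ) (t : ℕ → ℝ) (n : ℕ) (A : Set ℤ) :
    selectionStep y I t n A ⊆ A :=
  select_subset

lemma selectionStep_shift (y : ℤ → Λ) (I : Set ℤ) (t : ℕ → ℝ) (n : ℕ) (A : Set ℤ) :
    selectionStep (shift y) (shiftSet I) t n (shiftSet A) = shiftSet (selectionStep y I t n A) := by
  simp only [selectionStep, stepError, lowerUniformDensity_shiftSet, markers_shift,
    select_shiftSet]

variable {y : ℤ → Λ} {I : Set ℤ} {t : ℕ → ℝ}

lemma le_lowerUniformDensity_remainder (hy : Aperiodic y) (ht0 : ∀ n, 0 ≤ t n)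
    (hc : partialSumSup t < 1) (hpart : ∀ N, ∑ j ∈ range N, t j ≤ partialSumSup t)
    (hs : 0 < lowerUniformDensity I) (n : ℕ) :
    lowerUniformDensity I * (partialSumSup t - ∑ j ∈ range n, t j) + 4 * stepError I t n ≤
      lowerUniformDensity (remainder (selectionStep y I t) I n) := by
  induction n with
  | zero =>
    simp only [remainder, range_zero, sum_empty, stepError]
    linarith
  | succ n ih =>
    have hstep := (lowerUniformDensity_select_bounds (A := remainder (selectionStep y I t) I n)
      (isMarkerSet_markers hy _) (mul_nonneg (ht0 n) hs.le) (stepError_pos hc hs n) ?_).2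
    · have : stepError I t (n + 1) = stepError I t n / 2 := by
        simp only [stepError, pow_succ]; ring
      rw [sum_range_succ]
      exact (by linarith : _ ≤ _).trans hstep
    · have := hpart (n + 1)
      rw [sum_range_succ] at this
      nlinarith [stepError_pos hc hs n]

lemma mul_lowerUniformDensity_le_piece (hy : Aperiodic y) (ht0 : ∀ n, 0 ≤ t n)
    (hsum : ∃ c : ℝ, HasSum t c ∧ c < 1) (n : ℕ) :
    t n * lowerUniformDensity I ≤ lowerUniformDensity (piece (selectionStep y I t) I n) := by
  obtain ⟨c, hc, hc1⟩ := hsum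
  have hpart := sum_range_le_partialSumSup ht0 hc
  rcases (lowerUniformDensity_nonneg I).eq_or_lt with hs | hs
  · rw [← hs, mul_zero]
    exact lowerUniformDensity_nonneg _
  have hc1' := (partialSumSup_le ht0 hc).trans_lt hc1
  refine (lowerUniformDensity_select_bounds (isMarkerSet_markers hy _) (mul_nonneg (ht0 n) hs.le)
    (stepError_pos hc1' hs n) ?_).1
  have := le_lowerUniformDensity_remainder hy ht0 hc1' hpart hs n
  have := hpart (n + 1)
  rw [sum_range_succ] at this
  nlinarith [stepError_pos hc1' hs n]

lemma measurable_selectionStep [MeasurableSpace Λ] [DiscreteMeasurableSpace Λ] {X : Type*}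
    [MeasurableSpace X] {y : X → ℤ → Λ} {I A : X → Set ℤ} {t : X → ℕ → ℝ} (hy : Measurable y)
    (hI : Measurable I) (ht : Measurable t) (hA : Measurable A) (n : ℕ) :
    Measurable fun x => selectionStep (y x) (I x) (t x) n (A x) := by
  have hc : Measurable fun x => partialSumSup (t x) :=
    Measurable.iSup fun N => measurable_sum _ fun j _ => (measurable_pi_apply j).comp ht
  have := measurable_lowerUniformDensity hI
  have := measurable_lowerUniformDensity hA
  have hε : Measurable fun x => stepError (I x) (t x) n := by unfold stepError; fun_prop
  refine measurable_select (measurable_markers (Nat.measurable_ceil.comp hε.inv) hy) hA ?_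
  fun_prop

end Iteration

end StationarySelection

open StationarySelection

/-- **Stationary selection of a sequence of subsets.** There is a Borel map assigning to
each aperiodic `y ∈ Λ^ℤ`, each `I ⊆ ℤ` and each sequence `(t_n)` of nonnegative reals with
`∑ t_n < 1`, a sequence `(J_n)` of pairwise disjoint subsets of `I` with
`s̲*(J_n) ≥ t_n·s̲*(I)`, equivariantly: `(Sy, SI, (t_n)) ↦ (SJ_n)`. -/
theorem stationary_selection_sequence {Λ : Type*} [Countable Λ]
    [MeasurableSpace Λ] [DiscreteMeasurableSpace Λ] :
    ∃ Jmap : (ℤ → Λ) → Set ℤ → (ℕ → ℝ) → (ℕ → Set ℤ),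
      Measurable (fun p : (ℤ → Λ) × Set ℤ × (ℕ → ℝ) => Jmap p.1 p.2.1 p.2.2) ∧
      ∀ (y : ℤ → Λ) (I : Set ℤ) (t : ℕ → ℝ),
        Aperiodic y → (∀ n, 0 ≤ t n) → (∃ c : ℝ, HasSum t c ∧ c < 1) →
          (∀ n, Jmap y I t n ⊆ I) ∧
          (Pairwise fun m n => Disjoint (Jmap y I t m) (Jmap y I t n)) ∧
          (∀ n, t n * lowerUniformDensity I ≤ lowerUniformDensity (Jmap y I t n)) ∧
          (∀ n, Jmap (shift y) (shiftSet I) t n = shiftSet (Jmap y I t n)) := by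
  refine ⟨fun y I t => piece (selectionStep y I t) I, ?_, fun y I t hy ht0 hsum =>
    ⟨piece_subset (selectionStep_subset y I t), pairwise_disjoint_piece (selectionStep_subset y I t),
      mul_lowerUniformDensity_le_piece hy ht0 hsum,
      piece_preimage (g := (· + 1)) (selectionStep_shift y I t)⟩⟩
  exact measurable_pi_lambda _ fun n => measurable_piece (by fun_prop)
    (fun n A hA => measurable_selectionStep (by fun_prop) (by fun_prop) (by fun_prop) hA n) n
end

section
/- Let I ⊆ ℤ and let f : I → ℤ be an injection with bounded displacement, i.e. there is M such that |f(n) − n| ≤ M for all n ∈ I; let J = f(I). Then s̲*(J) = s̲*(I) and s̄*(J) = s̄*(I). -/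
open Filter
open scoped Classical

/-- The upper uniform density of a set `I ⊆ ℤ`:
`limsup_{N→∞} sup_{n∈ℤ} (1/N)·|I ∩ [n, n+N−1]|`. -/
noncomputable def upperUniformDensity (I : Set ℤ) : ℝ :=
  limsup (fun N : ℕ =>
    ⨆ n : ℤ, (∑ i ∈ Finset.range N, if n + (i : ℤ) ∈ I then (1 : ℝ) else 0) / N) atTop

/-!
An injection moving every point by at most `K` sends `I ∩ [n, n + N)` into `J ∩ [n - K, n + N + K)`,
so every window of length `N` meets `I` in at most `2K` more points than the window of the same
length starting at `n - K` meets `J`; the inverse map gives the same bound with `I` and `J`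
exchanged. After dividing by `N`, the window densities of `I` and `J` differ by at most `2K / N`,
which tends to `0` and so affects neither the `limsup` nor the `liminf`.
-/

open Finset Topology

/-- `|A ∩ [n, n + N)|`, written so that the uniform densities unfold definitionally to
`limsup`/`liminf` of `⨆ n, windowCount A n N / N` and `⨅ n, windowCount A n N / N`. -/
noncomputable def windowCount (A : Set ℤ) (n : ℤ) (N : ℕ) : ℝ :=
  ∑ i ∈ Finset.range N, if n + (i : ℤ) ∈ A then 1 else 0

section windowCount

variable (A : Set ℤ) (n : ℤ) (N : ℕ)

lemma windowCount_eq_card : windowCount A n N = #{x ∈ Ico n (n + N) | x ∈ A} := by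
  rw [← sum_boole, Int.Ico_eq_finset_map, sum_map, add_sub_cancel_left, Int.toNat_natCast]
  rfl

lemma windowCount_add (L : ℕ) :
    windowCount A n (N + L) = windowCount A n N + windowCount A (n + N) L := by
  simp only [windowCount, sum_range_add, Nat.cast_add, add_assoc]

lemma windowCount_nonneg : 0 ≤ windowCount A n N :=
  sum_nonneg fun _ _ => by positivity

lemma windowCount_le : windowCount A n N ≤ N := by
  rw [windowCount_eq_card]
  exact_mod_cast (card_filter_le _ _).trans (by simp)

lemma windowCount_div_mem_Icc : windowCount A n N / N ∈ Set.Icc (0 : ℝ) 1 :=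
  ⟨div_nonneg (windowCount_nonneg A n N) N.cast_nonneg,
    div_le_one_of_le₀ (windowCount_le A n N) N.cast_nonneg⟩

lemma bddAbove_range_windowCount_div : BddAbove (Set.range fun n => windowCount A n N / N) :=
  ⟨1, Set.forall_mem_range.2 fun n => (windowCount_div_mem_Icc A n N).2⟩

lemma bddBelow_range_windowCount_div : BddBelow (Set.range fun n => windowCount A n N / N) :=
  ⟨0, Set.forall_mem_range.2 fun n => (windowCount_div_mem_Icc A n N).1⟩

lemma iSup_windowCount_div_mem_Icc : ⨆ n, windowCount A n N / N ∈ Set.Icc (0 : ℝ) 1 :=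
  ⟨(windowCount_div_mem_Icc A 0 N).1.trans (le_ciSup (bddAbove_range_windowCount_div A N) 0),
    ciSup_le fun n => (windowCount_div_mem_Icc A n N).2⟩

lemma iInf_windowCount_div_mem_Icc : ⨅ n, windowCount A n N / N ∈ Set.Icc (0 : ℝ) 1 :=
  ⟨le_ciInf fun n => (windowCount_div_mem_Icc A n N).1,
    (ciInf_le (bddBelow_range_windowCount_div A N) 0).trans (windowCount_div_mem_Icc A 0 N).2⟩

end windowCount

lemma windowCount_le_add_of_injOn {A B : Set ℤ} {g : ℤ → ℤ} {K : ℕ} (hmaps : Set.MapsTo g A B)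
    (hinj : Set.InjOn g A) (hdisp : ∀ a ∈ A, |g a - a| ≤ K) (n : ℤ) (N : ℕ) :
    windowCount A n N ≤ windowCount B (n - K) N + 2 * K := by
  have enlarge : windowCount A n N ≤ windowCount B (n - K) (N + 2 * K) := by
    simp only [windowCount_eq_card]
    refine Nat.cast_le.2 (card_le_card_of_injOn g (fun x hx => ?_) ?_)
    · simp only [coe_filter, mem_Ico, Set.mem_ofPred_eq] at hx ⊢
      have := abs_le.1 (hdisp x hx.2)
      exact ⟨⟨by omega, by push_cast; omega⟩, hmaps hx.2⟩
    · exact hinj.mono fun x hx => (mem_filter.1 hx).2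
  calc windowCount A n N ≤ windowCount B (n - K) (N + 2 * K) := enlarge
    _ = windowCount B (n - K) N + windowCount B (n - K + N) (2 * K) := windowCount_add ..
    _ ≤ windowCount B (n - K) N + 2 * K := by
      grw [windowCount_le B (n - K + N)]
      push_cast
      rfl

section windowCountComparison

variable {A B : Set ℤ} {K : ℤ} {C : ℝ} {N : ℕ}

lemma windowCount_div_le_add (h : ∀ n, windowCount A n N ≤ windowCount B (n - K) N + C)
    (n : ℤ) : windowCount A n N / N ≤ windowCount B (n - K) N / N + C / N := by
  rw [← add_div]
  exact div_le_div_of_nonneg_right (h n) N.cast_nonneg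

lemma iSup_windowCount_div_le (h : ∀ n, windowCount A n N ≤ windowCount B (n - K) N + C) :
    ⨆ n, windowCount A n N / N ≤ (⨆ n, windowCount B n N / N) + C / N :=
  ciSup_le fun n => (windowCount_div_le_add h n).trans <|
    add_le_add (le_ciSup (bddAbove_range_windowCount_div B N) (n - K)) le_rfl

lemma iInf_windowCount_div_le (h : ∀ n, windowCount A n N ≤ windowCount B (n - K) N + C) :
    ⨅ n, windowCount A n N / N ≤ (⨅ n, windowCount B n N / N) + C / N := by
  rw [← sub_le_iff_le_add]
  refine le_ciInf fun m => sub_le_iff_le_add.2 ?_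
  calc ⨅ n, windowCount A n N / N ≤ windowCount A (m + K) N / N :=
        ciInf_le (bddBelow_range_windowCount_div A N) (m + K)
    _ ≤ windowCount B m N / N + C / N := by simpa using windowCount_div_le_add h (m + K)

end windowCountComparison

section LimsupLiminf

variable {ι : Type*} {l : Filter ι} [l.NeBot] {u v c : ι → ℝ}

lemma limsup_le_limsup_of_le_add (hu : IsBoundedUnder (· ≥ ·) l u)
    (hv_le : IsBoundedUnder (· ≤ ·) l v) (hv_ge : IsBoundedUnder (· ≥ ·) l v)
    (hc : Tendsto c l (𝓝 0)) (h : ∀ᶠ i in l, u i ≤ v i + c i) :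
    limsup u l ≤ limsup v l := by
  have hc_le : IsBoundedUnder (· ≤ ·) l c := hc.isBoundedUnder_le
  calc limsup u l ≤ limsup (v + c) l :=
        limsup_le_limsup h hu.isCoboundedUnder_le (isBoundedUnder_le_add hv_le hc_le)
    _ ≤ limsup v l + limsup c l :=
        limsup_add_le hv_ge hv_le hc.isBoundedUnder_ge.isCoboundedUnder_le hc_le
    _ = limsup v l := by rw [hc.limsup_eq, add_zero]

lemma liminf_le_liminf_of_le_add (hu : IsBoundedUnder (· ≥ ·) l u)
    (hv_le : IsBoundedUnder (· ≤ ·) l v) (hv_ge : IsBoundedUnder (· ≥ ·) l v)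
    (hc : Tendsto c l (𝓝 0)) (h : ∀ᶠ i in l, u i ≤ v i + c i) :
    liminf u l ≤ liminf v l := by
  have hc_le : IsBoundedUnder (· ≤ ·) l c := hc.isBoundedUnder_le
  calc liminf u l ≤ liminf (c + v) l :=
        liminf_le_liminf (h.mono fun i hi => hi.trans_eq (add_comm _ _)) hu
          (isBoundedUnder_le_add hc_le hv_le).isCoboundedUnder_ge
    _ ≤ limsup c l + liminf v l :=
        liminf_add_le hc.isBoundedUnder_ge hc_le hv_ge hv_le.isCoboundedUnder_ge
    _ = liminf v l := by rw [hc.limsup_eq, zero_add]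

end LimsupLiminf

section UniformDensity

variable {A B : Set ℤ} {K : ℤ} {C : ℝ}

lemma upperUniformDensity_le_of_windowCount_le
    (h : ∀ n N, windowCount A n N ≤ windowCount B (n - K) N + C) :
    upperUniformDensity A ≤ upperUniformDensity B :=
  limsup_le_limsup_of_le_add
    (isBoundedUnder_of ⟨0, fun N => (iSup_windowCount_div_mem_Icc A N).1⟩)
    (isBoundedUnder_of ⟨1, fun N => (iSup_windowCount_div_mem_Icc B N).2⟩)
    (isBoundedUnder_of ⟨0, fun N => (iSup_windowCount_div_mem_Icc B N).1⟩)
    (tendsto_const_div_atTop_nhds_zero_nat C)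
    (Eventually.of_forall fun N => iSup_windowCount_div_le (h · N))

lemma lowerUniformDensity_le_of_windowCount_le
    (h : ∀ n N, windowCount A n N ≤ windowCount B (n - K) N + C) :
    lowerUniformDensity A ≤ lowerUniformDensity B :=
  liminf_le_liminf_of_le_add
    (isBoundedUnder_of ⟨0, fun N => (iInf_windowCount_div_mem_Icc A N).1⟩)
    (isBoundedUnder_of ⟨1, fun N => (iInf_windowCount_div_mem_Icc B N).2⟩)
    (isBoundedUnder_of ⟨0, fun N => (iInf_windowCount_div_mem_Icc B N).1⟩)
    (tendsto_const_div_atTop_nhds_zero_nat C)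
    (Eventually.of_forall fun N => iInf_windowCount_div_le (h · N))

end UniformDensity

/-- **Bounded displacement preserves uniform densities.** If `f : I → ℤ` is injective with
`|f(n) − n| ≤ M` for all `n ∈ I`, and `J = f(I)`, then `s̲*(J) = s̲*(I)` and
`s̄*(J) = s̄*(I)`. -/
theorem boundedDisplacement_preserves_uniform_density (I : Set ℤ) (f : ℤ → ℤ)
    (hinj : Set.InjOn f I) (M : ℤ) (hdisp : ∀ n ∈ I, |f n - n| ≤ M) :
    lowerUniformDensity (f '' I) = lowerUniformDensity I ∧
    upperUniformDensity (f '' I) = upperUniformDensity I := by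
  have hdispK : ∀ n ∈ I, |f n - n| ≤ M.toNat := fun n hn => (hdisp n hn).trans M.self_le_toNat
  have hbij := hinj.bijOn_image
  have hinv := hbij.invOn_invFunOn
  have hbij_inv := Set.BijOn.symm hinv.symm hbij
  have hdisp_inv : ∀ m ∈ f '' I, |Function.invFunOn f I m - m| ≤ M.toNat := by
    rintro _ ⟨n, hn, rfl⟩
    rw [hinv.1 hn, abs_sub_comm]
    exact hdispK n hn
  have forward := windowCount_le_add_of_injOn hbij.mapsTo hinj hdispK
  have backward := windowCount_le_add_of_injOn hbij_inv.mapsTo hbij_inv.injOn hdisp_inv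
  exact ⟨(lowerUniformDensity_le_of_windowCount_le backward).antisymm
      (lowerUniformDensity_le_of_windowCount_le forward),
    (upperUniformDensity_le_of_windowCount_le backward).antisymm
      (upperUniformDensity_le_of_windowCount_le forward)⟩
end

section
/- Let Σ be a finite alphabet and let f : Σ_AP^ℤ → {0,1}^ℕ be a Borel shift-invariant function (f(Sx) = f(x)). Then there is a Borel measurable assignment that associates to each triple (x, y, I), where x, y ∈ Σ_AP^ℤ and I ⊆ ℤ with s̲(I) > 0, an element z = z(x, y, I) ∈ {0,1}^I, equivariantly in the sense that z(Sx, Sy, SI) = S(z(x, y, I)) (where (Sz)(i) = z(i+1)), and such that the pair (x, z) determines f(y): there is a map D with D(x, z(x, y, I)) = f(y) for all such triples (x, y, I). -/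
open Filter
open scoped Classical

/-- Discrete measurable structure on `Option Bool` (partial binary values). -/
instance optionBoolMeasurableSpace : MeasurableSpace (Option Bool) := ⊤

/-- The shift on partial binary sequences: `(Sz)(i) = z(i+1)`. -/
def shiftPartial (z : ℤ → Option Bool) : ℤ → Option Bool := fun i => z (i + 1)

/-- The lower density of `I ⊆ ℤ`: `liminf_N (1/N)·|I ∩ [0,N−1]|`. -/
noncomputable def lowerDensity (I : Set ℤ) : ℝ :=
  liminf (fun N : ℕ => (∑ i ∈ Finset.range N, if (i : ℤ) ∈ I then (1 : ℝ) else 0) / N) atTop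

/-! Write `Sⁱ` for translation by `i`. At each `i ∈ I` the code `z(x, y, I)` stores one bit of
`f (Sⁱ y) = f y`, namely bit number `ι (Sⁱ x, Sⁱ I)`, where `ι` is Borel and `i ↦ ι (Sⁱ x, Sⁱ I)`
maps `I` onto `ℕ`; knowing `x` and the domain `I` of `z`, one can then read off every bit of
`f y`. Such an `ι` is the rank of `κ` among the values `κ` takes along `I`, for any Borel `κ`
taking infinitely many values along `I`.

For `κ` we use the greedy word `W` of `x`, each letter chosen so that the prefix built so far
recurs infinitely often to the right in `x`. If `W` occurs in full in `x`, aperiodicity gives a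
leftmost full occurrence and we count the points of `I` since then; otherwise we record the
longest prefix of `W` starting between a point of `I` and the next one, which is unbounded along
`I` because every prefix of `W` recurs. -/

open Set

namespace ShiftCoding

section Translation

variable {α : Type*}

def shiftBy (i : ℤ) (x : ℤ → α) : ℤ → α := fun j => x (j + i)

def shiftSetBy (i : ℤ) (I : Set ℤ) : Set ℤ := (· + i) ⁻¹' I

@[simp] lemma shiftBy_apply (i j : ℤ) (x : ℤ → α) : shiftBy i x j = x (j + i) := rfl

@[simp] lemma mem_shiftSetBy {i j : ℤ} {I : Set ℤ} : j ∈ shiftSetBy i I ↔ j + i ∈ I := Iff.rfl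

lemma shiftBy_shiftBy (i j : ℤ) (x : ℤ → α) : shiftBy i (shiftBy j x) = shiftBy (i + j) x := by
  ext k; simp [add_assoc]

lemma shiftSetBy_shiftSetBy (i j : ℤ) (I : Set ℤ) :
    shiftSetBy i (shiftSetBy j I) = shiftSetBy (i + j) I := by
  ext k; simp [add_assoc]

@[simp] lemma shiftBy_zero (x : ℤ → α) : shiftBy 0 x = x := by
  ext j; simp

lemma shift_eq_shiftBy_one (x : ℤ → α) : shift x = shiftBy 1 x := rfl

lemma shiftSet_eq_shiftSetBy_one (I : Set ℤ) : shiftSet I = shiftSetBy 1 I := rfl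

lemma aperiodic_shiftBy {x : ℤ → α} (hx : Aperiodic x) (i : ℤ) : Aperiodic (shiftBy i x) := by
  intro p hp h
  apply hx p hp
  ext j
  simpa [add_right_comm] using congrFun h (j - i)

lemma apply_shiftBy_of_shift_invariant {β : Type*} {f : (ℤ → α) → β}
    (hinv : ∀ x, Aperiodic x → f (shift x) = f x) {x : ℤ → α} (hx : Aperiodic x) (i : ℤ) :
    f (shiftBy i x) = f x := by
  induction i using Int.induction_on with
  | zero => rw [shiftBy_zero]
  | succ i ih =>
    rw [← ih, ← hinv _ (aperiodic_shiftBy hx i), shift_eq_shiftBy_one, shiftBy_shiftBy, add_comm]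
  | pred i ih =>
    rw [← ih, ← hinv _ (aperiodic_shiftBy hx _), shift_eq_shiftBy_one, shiftBy_shiftBy]
    ring_nf

@[fun_prop]
lemma measurable_shiftBy [MeasurableSpace α] (i : ℤ) : Measurable (shiftBy (α := α) i) :=
  measurable_pi_lambda _ fun _ => measurable_pi_apply _

@[fun_prop]
lemma measurable_shiftSetBy (i : ℤ) : Measurable (shiftSetBy i) :=
  measurable_set_iff.2 fun _ => measurable_set_mem _

end Translation

section Labelling

variable {α : Type*} (κ : (ℤ → α) → Set ℤ → ℕ)

def labelSet (x : ℤ → α) (I : Set ℤ) : Set ℕ :=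
  {n | ∃ i ∈ I, κ (shiftBy i x) (shiftSetBy i I) = n}

noncomputable def label (x : ℤ → α) (I : Set ℤ) : ℕ :=
  Nat.count (· ∈ labelSet κ x I) (κ x I)

lemma labelSet_shiftBy (j : ℤ) (x : ℤ → α) (I : Set ℤ) :
    labelSet κ (shiftBy j x) (shiftSetBy j I) = labelSet κ x I := by
  ext n
  simp only [labelSet, mem_ofPred_eq, mem_shiftSetBy, shiftBy_shiftBy, shiftSetBy_shiftSetBy]
  constructor
  · rintro ⟨i, hi, rfl⟩
    exact ⟨i + j, hi, rfl⟩
  · rintro ⟨i, hi, rfl⟩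
    exact ⟨i - j, by simpa using hi, by simp⟩

lemma exists_label_eq {x : ℤ → α} {I : Set ℤ} (hK : (labelSet κ x I).Infinite) (n : ℕ) :
    ∃ i ∈ I, label κ (shiftBy i x) (shiftSetBy i I) = n := by
  obtain ⟨i, hi, hκ⟩ := Nat.nth_mem_of_infinite hK n
  exact ⟨i, hi, by rw [label, labelSet_shiftBy, hκ]; exact Nat.count_nth_of_infinite hK n⟩

lemma count_eq_ncard (P : ℕ → Prop) [DecidablePred P] (k : ℕ) :
    Nat.count P k = {n | n < k ∧ P n}.ncard := by
  rw [Nat.count_eq_card_filter_range, ← ncard_coe_finset]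
  congr 1; ext; simp

lemma measurable_label [MeasurableSpace α]
    (hκ : Measurable fun q : (ℤ → α) × Set ℤ => κ q.1 q.2) :
    Measurable fun q : (ℤ → α) × Set ℤ => label κ q.1 q.2 := by
  have hκ' (i : ℤ) : Measurable fun q : (ℤ → α) × Set ℤ => κ (shiftBy i q.1) (shiftSetBy i q.2) :=
    hκ.comp (f := fun q : (ℤ → α) × Set ℤ => (shiftBy i q.1, shiftSetBy i q.2)) (by fun_prop)
  simp_rw [label, count_eq_ncard, labelSet, mem_ofPred_eq]
  fun_prop

end Labelling

section Coding

variable {α : Type*} (f : (ℤ → α) → ℕ → Bool) (κ : (ℤ → α) → Set ℤ → ℕ)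

noncomputable def code (x y : ℤ → α) (I : Set ℤ) : ℤ → Option Bool := fun i =>
  if i ∈ I then some (f (shiftBy i y) (label κ (shiftBy i x) (shiftSetBy i I))) else none

lemma code_isSome_iff (x y : ℤ → α) (I : Set ℤ) (i : ℤ) : (code f κ x y I i).isSome ↔ i ∈ I := by
  by_cases hi : i ∈ I <;> simp [code, hi]

lemma code_shift (x y : ℤ → α) (I : Set ℤ) :
    code f κ (shift x) (shift y) (shiftSet I) = shiftPartial (code f κ x y I) := by
  ext1 i
  simp only [code, shiftPartial, shift_eq_shiftBy_one, shiftSet_eq_shiftSetBy_one, shiftBy_shiftBy,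
    shiftSetBy_shiftSetBy, mem_shiftSetBy]

lemma apply_eq_of_code_eq (hinv : ∀ x, Aperiodic x → f (shift x) = f x) {x y y' : ℤ → α}
    {I I' : Set ℤ} (hK : (labelSet κ x I).Infinite) (hy : Aperiodic y) (hy' : Aperiodic y')
    (h : code f κ x y I = code f κ x y' I') : f y = f y' := by
  obtain rfl : I = I' := by
    ext i; rw [← code_isSome_iff f κ x y, ← code_isSome_iff f κ x y', h]
  ext1 n
  obtain ⟨i, hi, rfl⟩ := exists_label_eq κ hK n
  have hi' := congrFun h i
  simp only [code, hi, if_true, Option.some_inj] at hi'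
  rw [← apply_shiftBy_of_shift_invariant hinv hy i, ← apply_shiftBy_of_shift_invariant hinv hy' i,
    hi']

lemma measurable_code [MeasurableSpace α] (hf : Measurable f)
    (hκ : Measurable fun q : (ℤ → α) × Set ℤ => κ q.1 q.2) :
    Measurable fun p : (ℤ → α) × (ℤ → α) × Set ℤ => code f κ p.1 p.2.1 p.2.2 := by
  refine measurable_pi_lambda _ fun i => Measurable.ite ?_ ?_ measurable_const
  · exact measurableSet_setOfPred.2 (by fun_prop)
  · have hval : Measurable fun p : ((ℤ → α) × (ℤ → α) × Set ℤ) × ℕ => f (shiftBy i p.1.2.1) p.2 :=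
      measurable_from_prod_countable_left fun n => (measurable_pi_apply n).comp (by fun_prop)
    have hlabel : Measurable fun p : (ℤ → α) × (ℤ → α) × Set ℤ =>
        label κ (shiftBy i p.1) (shiftSetBy i p.2.2) :=
      (measurable_label κ hκ).comp (by fun_prop :
        Measurable fun p : (ℤ → α) × (ℤ → α) × Set ℤ => (shiftBy i p.1, shiftSetBy i p.2.2))
    exact Measurable.of_discrete.comp (hval.comp (measurable_id.prodMk hlabel))

end Coding

lemma not_bddAbove_of_lowerDensity_pos {I : Set ℤ} (hI : 0 < lowerDensity I) : ¬BddAbove I := by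
  rintro ⟨N, hN⟩
  have hcount (n : ℕ) :
      (∑ i ∈ Finset.range n, if (i : ℤ) ∈ I then (1 : ℝ) else 0) ≤ (N + 1).toNat := by
    rw [Finset.sum_boole]
    exact_mod_cast (Finset.card_le_card fun i hi => by
      simp only [Finset.mem_filter, Finset.mem_range] at hi ⊢
      have := hN hi.2; omega).trans (Finset.card_range _).le
  have hlim : Tendsto (fun n : ℕ =>
      (∑ i ∈ Finset.range n, if (i : ℤ) ∈ I then (1 : ℝ) else 0) / n) atTop (nhds 0) :=
    squeeze_zero (fun n => by positivity)
      (fun n => div_le_div_of_nonneg_right (hcount n) n.cast_nonneg)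
      (tendsto_const_div_atTop_nhds_zero_nat _)
  exact hI.ne' hlim.liminf_eq

section Markers

variable {α : Type*} {x : ℤ → α} {W : ℕ → α} {I : Set ℤ}

def tailSet (x : ℤ → α) (W : ℕ → α) : Set ℤ := {m | ∀ s : ℕ, x (m + s) = W s}

lemma bddBelow_tailSet (hx : Aperiodic x) (W : ℕ → α) : BddBelow (tailSet x W) := by
  by_contra hT
  rw [not_bddBelow_iff] at hT
  have hread {m : ℤ} (hm : m ∈ tailSet x W) {j : ℤ} (hj : m ≤ j) : x j = W (j - m).toNat := by
    rw [← hm, show m + ((j - m).toNat : ℤ) = j by omega]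
  obtain ⟨m₂, hm₂, -⟩ := hT 0
  obtain ⟨m₁, hm₁, h₁₂⟩ := hT m₂
  set p := (m₂ - m₁).toNat
  have hW (s : ℕ) : W (s + p) = W s := by
    rw [← hm₁, ← hm₂]; congr 1; push_cast; omega
  refine hx p (by omega) (funext fun j => ?_)
  obtain ⟨m, hm, hmj⟩ := hT j
  rw [hread hm (by omega), hread hm hmj.le, ← hW ((j - m).toNat)]
  congr 1
  omega

noncomputable def anchorCount (x : ℤ → α) (W : ℕ → α) (I : Set ℤ) (i : ℤ) : ℕ :=
  {j | j ∈ I ∧ j < i ∧ ∃ m ∈ tailSet x W, m ≤ j}.ncard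

noncomputable def windowRank (x : ℤ → α) (W : ℕ → α) (I : Set ℤ) (i : ℤ) : ℕ :=
  {t : ℕ | ∃ m, i < m ∧ (∀ k ∈ I, i < k → m ≤ k) ∧ ∀ s : ℕ, s < t → x (m + s) = W s}.ncard

lemma exists_le_anchorCount (hx : Aperiodic x) (hT : (tailSet x W).Nonempty) (hI : ¬BddAbove I)
    (B : ℕ) : ∃ i ∈ I, B ≤ anchorCount x W I i := by
  obtain ⟨a, ha⟩ := hT
  obtain ⟨b, hb⟩ := bddBelow_tailSet hx W
  have hfin (i : ℤ) : {j | j ∈ I ∧ j < i ∧ ∃ m ∈ tailSet x W, m ≤ j}.Finite :=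
    (finite_Ico b i).subset fun j ⟨_, hji, m, hm, hmj⟩ => ⟨(hb hm).trans hmj, hji⟩
  suffices ∃ i ∈ I, a ≤ i ∧ B ≤ anchorCount x W I i by
    obtain ⟨i, hi, -, hB⟩ := this; exact ⟨i, hi, hB⟩
  induction B with
  | zero =>
    obtain ⟨i, hi, hai⟩ := not_bddAbove_iff.1 hI a
    exact ⟨i, hi, hai.le, Nat.zero_le _⟩
  | succ B ih =>
    obtain ⟨i, hi, hai, hB⟩ := ih
    obtain ⟨i', hi', hii'⟩ := not_bddAbove_iff.1 hI i
    refine ⟨i', hi', hai.trans hii'.le, ?_⟩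
    calc B + 1 ≤ (insert i {j | j ∈ I ∧ j < i ∧ ∃ m ∈ tailSet x W, m ≤ j}).ncard := by
          rw [ncard_insert_of_notMem (fun h => h.2.1.false) (hfin i)]; exact Nat.succ_le_succ hB
      _ ≤ anchorCount x W I i' := ncard_le_ncard (insert_subset ⟨hi, hii', a, ha, hai⟩
          fun j ⟨hj, hji, hm⟩ => ⟨hj, hji.trans hii', hm⟩) (hfin i')

lemma exists_le_windowRank (hT : tailSet x W = ∅)
    (hW : ∀ t, ∃ᶠ m in atTop, ∀ s : ℕ, s < t → x (m + s) = W s) (hI : ¬BddAbove I) (B : ℕ) :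
    ∃ i ∈ I, B ≤ windowRank x W I i := by
  obtain ⟨i₀, hi₀⟩ := nonempty_of_not_bddAbove hI
  obtain ⟨m, hi₀m, hmB⟩ := frequently_atTop.1 (hW B) (i₀ + 1)
  obtain ⟨i, ⟨hi, him⟩, himax⟩ := Int.exists_greatest_of_bdd (P := fun k => k ∈ I ∧ k < m)
    ⟨m, fun k hk => hk.2.le⟩ ⟨i₀, hi₀, by omega⟩
  refine ⟨i, hi, ?_⟩
  obtain ⟨ν, hν, hiν⟩ := not_bddAbove_iff.1 hI i
  have hfail (m' : ℤ) : ∃ s : ℕ, x (m' + s) ≠ W s := by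
    by_contra! h; exact (eq_empty_iff_forall_notMem.1 hT m') h
  choose σ hσ using hfail
  have hfin : {t : ℕ | ∃ m, i < m ∧ (∀ k ∈ I, i < k → m ≤ k) ∧
      ∀ s : ℕ, s < t → x (m + s) = W s}.Finite := by
    refine ((finite_Icc i ν).biUnion fun m' _ => finite_Iic (σ m')).subset ?_
    rintro t ⟨m', hm', hwin, ht⟩
    exact mem_biUnion ⟨hm'.le, hwin ν hν hiν⟩ (not_lt.1 fun h => hσ m' (ht _ h))
  calc B = (Finset.range B : Set ℕ).ncard := by rw [ncard_coe_finset, Finset.card_range]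
    _ ≤ windowRank x W I i := by
      refine ncard_le_ncard (fun t ht => ⟨m, him, fun k hk hik => ?_, fun s hs => hmB s ?_⟩) hfin
      · by_contra! hkm; have := himax k ⟨hk, hkm⟩; omega
      · simp only [Finset.coe_range, mem_Iio] at ht; omega

lemma exists_le_anchorCount_add_windowRank (hx : Aperiodic x)
    (hW : ∀ t, ∃ᶠ m in atTop, ∀ s : ℕ, s < t → x (m + s) = W s) (hI : ¬BddAbove I) (B : ℕ) :
    ∃ i ∈ I, B ≤ anchorCount x W I i + windowRank x W I i := by
  rcases (tailSet x W).eq_empty_or_nonempty with hT | hT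
  · obtain ⟨i, hi, hB⟩ := exists_le_windowRank hT hW hI B
    exact ⟨i, hi, hB.trans (Nat.le_add_left _ _)⟩
  · obtain ⟨i, hi, hB⟩ := exists_le_anchorCount hx hT hI B
    exact ⟨i, hi, hB.trans (Nat.le_add_right _ _)⟩

lemma tailSet_shiftBy (i : ℤ) : tailSet (shiftBy i x) W = shiftSetBy i (tailSet x W) := by
  ext m; simp [tailSet, add_right_comm]

lemma anchorCount_shiftBy (i k : ℤ) :
    anchorCount (shiftBy i x) W (shiftSetBy i I) k = anchorCount x W I (k + i) := by
  refine (congrArg ncard ?_).trans (ncard_preimage_of_injective_subset_range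
    (add_left_injective i) fun j _ => ⟨j - i, by simp⟩)
  ext j
  simp only [tailSet_shiftBy, mem_shiftSetBy, mem_preimage, mem_ofPred_eq, add_lt_add_iff_right]
  refine and_congr_right fun _ => and_congr_right fun _ =>
    ⟨fun ⟨m, hm, hmj⟩ => ⟨m + i, hm, by omega⟩, fun ⟨m, hm, hmj⟩ => ⟨m - i, by simpa, by omega⟩⟩

lemma windowRank_shiftBy (i k : ℤ) :
    windowRank (shiftBy i x) W (shiftSetBy i I) k = windowRank x W I (k + i) := by
  rw [windowRank, windowRank]
  congr 1
  ext t
  simp only [mem_shiftSetBy, shiftBy_apply, mem_ofPred_eq]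
  constructor
  · rintro ⟨m, hkm, hwin, hm⟩
    refine ⟨m + i, by omega, fun l hl hkl => ?_, fun s hs => by rw [← hm s hs]; ring_nf⟩
    have := hwin (l - i) (by simpa using hl) (by omega); omega
  · rintro ⟨m, hkm, hwin, hm⟩
    refine ⟨m - i, by omega, fun l hl hkl => ?_, fun s hs => by rw [← hm s hs]; ring_nf⟩
    have := hwin (l + i) hl (by omega); omega

end Markers

section Greedy

variable {α : Type*}

def Recurrent (x : ℤ → α) {n : ℕ} (u : Fin n → α) : Prop :=
  ∃ᶠ m in atTop, ∀ s : Fin n, x (m + s) = u s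

lemma recurrent_shiftBy_iff {x : ℤ → α} {n : ℕ} {u : Fin n → α} (i : ℤ) :
    Recurrent (shiftBy i x) u ↔ Recurrent x u := by
  unfold Recurrent
  conv_rhs => rw [← map_add_atTop_eq i, frequently_map]
  simp only [shiftBy_apply, add_right_comm]

lemma Recurrent.exists_snoc [Finite α] {x : ℤ → α} {n : ℕ} {u : Fin n → α} (h : Recurrent x u) :
    ∃ b, Recurrent x (Fin.snoc u b : Fin (n + 1) → α) := by
  refine frequently_exists.1 (h.mono fun m hm => ⟨x (m + n), fun s => ?_⟩)
  induction s using Fin.lastCases with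
  | last => simp
  | cast s => simpa using hm s

noncomputable def nextLetter (x : ℤ → α) {n : ℕ} (u : Fin n → α) : α :=
  @Classical.epsilon _ ⟨x 0⟩ fun b => Recurrent x (Fin.snoc u b : Fin (n + 1) → α)

noncomputable def greedyPrefix (x : ℤ → α) : (t : ℕ) → Fin t → α
  | 0 => Fin.elim0
  | t + 1 => Fin.snoc (greedyPrefix x t) (nextLetter x (greedyPrefix x t))

noncomputable def greedySeq (x : ℤ → α) (s : ℕ) : α := greedyPrefix x (s + 1) (Fin.last s)

lemma greedyPrefix_apply (x : ℤ → α) (t : ℕ) (s : Fin t) : greedyPrefix x t s = greedySeq x s := by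
  induction t with
  | zero => exact s.elim0
  | succ t ih =>
    induction s using Fin.lastCases with
    | last => rfl
    | cast s => simp [greedyPrefix, ih]

lemma recurrent_greedyPrefix [Finite α] (x : ℤ → α) (t : ℕ) : Recurrent x (greedyPrefix x t) := by
  induction t with
  | zero => exact Frequently.of_forall fun _ s => s.elim0
  | succ t ih =>
    have : Nonempty α := ⟨x 0⟩
    exact Classical.epsilon_spec ih.exists_snoc

lemma frequently_greedySeq [Finite α] (x : ℤ → α) (t : ℕ) :
    ∃ᶠ m in atTop, ∀ s : ℕ, s < t → x (m + s) = greedySeq x s :=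
  (recurrent_greedyPrefix x t).mono fun _ hm s hs => by simpa [greedyPrefix_apply] using hm ⟨s, hs⟩

lemma greedySeq_shiftBy (i : ℤ) (x : ℤ → α) : greedySeq (shiftBy i x) = greedySeq x := by
  have (t : ℕ) : greedyPrefix (shiftBy i x) t = greedyPrefix x t := by
    induction t with
    | zero => rfl
    | succ t ih => simp only [greedyPrefix, nextLetter, ih, recurrent_shiftBy_iff]
  ext s; simp only [greedySeq, this]

variable [MeasurableSpace α] [DiscreteMeasurableSpace α]

lemma measurable_recurrent {n : ℕ} (u : Fin n → α) : Measurable fun x : ℤ → α => Recurrent x u := by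
  simp only [Recurrent, frequently_atTop]
  fun_prop

lemma measurable_nextLetter [Finite α] {n : ℕ} (u : Fin n → α) :
    Measurable fun x : ℤ → α => nextLetter x u := by
  rcases isEmpty_or_nonempty α with _ | _
  · exact Subsingleton.measurable
  · have : Measurable fun x : ℤ → α => {b | Recurrent x (Fin.snoc u b : Fin (n + 1) → α)} :=
      measurable_set_iff.2 fun _ => measurable_recurrent _
    exact (measurable_of_countable fun S : Set α => Classical.epsilon (· ∈ S)).comp this

lemma measurable_greedyPrefix [Finite α] (t : ℕ) :
    Measurable fun x : ℤ → α => greedyPrefix x t := by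
  induction t with
  | zero => exact measurable_const
  | succ t ih =>
    have : Measurable fun p : (ℤ → α) × (Fin t → α) =>
        (Fin.snoc p.2 (nextLetter p.1 p.2) : Fin (t + 1) → α) :=
      measurable_from_prod_countable_left fun u =>
        (measurable_of_countable fun b => (Fin.snoc u b : Fin (t + 1) → α)).comp
          (measurable_nextLetter u)
    exact this.comp (measurable_id.prodMk ih)

@[fun_prop]
lemma measurable_greedySeq [Finite α] (s : ℕ) : Measurable fun x : ℤ → α => greedySeq x s :=
  (measurable_pi_apply _).comp (measurable_greedyPrefix _)

end Greedy

section Marker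

variable {α : Type*}

/- Either summand may be the junk value `0` (`ncard` of an infinite set), but along `I` one of
them is unbounded: the first if `greedySeq x` occurs in full in `x`, the second otherwise. -/
noncomputable def marker (x : ℤ → α) (I : Set ℤ) : ℕ :=
  anchorCount x (greedySeq x) I 0 + windowRank x (greedySeq x) I 0

lemma labelSet_marker_infinite [Finite α] {x : ℤ → α} {I : Set ℤ} (hx : Aperiodic x)
    (hI : ¬BddAbove I) : (labelSet marker x I).Infinite := by
  refine infinite_of_not_bddAbove fun ⟨B, hB⟩ => ?_
  obtain ⟨i, hi, hle⟩ :=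
    exists_le_anchorCount_add_windowRank hx (frequently_greedySeq x) hI (B + 1)
  have := hB ⟨i, hi, rfl⟩
  rw [marker, greedySeq_shiftBy, anchorCount_shiftBy, windowRank_shiftBy, zero_add] at this
  omega

lemma measurable_marker [Finite α] [MeasurableSpace α] [DiscreteMeasurableSpace α] :
    Measurable fun q : (ℤ → α) × Set ℤ => marker q.1 q.2 := by
  simp only [marker, anchorCount, windowRank, tailSet]
  fun_prop

end Marker

end ShiftCoding

open ShiftCoding in
/-- **Coding shift-invariant data.** Let `Λ` be a finite alphabet and
`f : Λ_AP^ℤ → {0,1}^ℕ` a Borel shift-invariant function. Then one can associate, Borel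
measurably and equivariantly, to each `x, y ∈ Λ_AP^ℤ` and `I ⊆ ℤ` with `s̲(I) > 0` an
element `z = z(x,y,I) ∈ {0,1}^I` such that `(x,z)` determines `f(y)`. -/
theorem coding_shift_invariant_data {Λ : Type*} [Fintype Λ]
    [MeasurableSpace Λ] [DiscreteMeasurableSpace Λ]
    (f : (ℤ → Λ) → (ℕ → Bool)) (hf : Measurable f)
    (hinv : ∀ x : ℤ → Λ, Aperiodic x → f (shift x) = f x) :
    ∃ z : (ℤ → Λ) → (ℤ → Λ) → Set ℤ → (ℤ → Option Bool),
      Measurable (fun p : (ℤ → Λ) × (ℤ → Λ) × Set ℤ => z p.1 p.2.1 p.2.2) ∧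
      (∀ (x y : ℤ → Λ) (I : Set ℤ), Aperiodic x → Aperiodic y → 0 < lowerDensity I →
        -- `z(x,y,I)` is an element of `{0,1}^I`
        (∀ i : ℤ, (z x y I i).isSome ↔ i ∈ I) ∧
        -- equivariance: `z(Sx, Sy, SI) = S(z(x,y,I))`
        z (shift x) (shift y) (shiftSet I) = shiftPartial (z x y I)) ∧
      -- `(x, z)` determines `f(y)`
      ∃ D : (ℤ → Λ) → (ℤ → Option Bool) → (ℕ → Bool),
        ∀ (x y : ℤ → Λ) (I : Set ℤ), Aperiodic x → Aperiodic y → 0 < lowerDensity I →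
          D x (z x y I) = f y := by
  refine ⟨code f marker, measurable_code f marker hf measurable_marker,
    fun x y I _ _ _ => ⟨code_isSome_iff f marker x y I, code_shift f marker x y I⟩, ?_⟩
  let Good := {p : (ℤ → Λ) × (ℤ → Λ) × Set ℤ //
    Aperiodic p.1 ∧ Aperiodic p.2.1 ∧ 0 < lowerDensity p.2.2}
  let encode (p : Good) := (p.1.1, code f marker p.1.1 p.1.2.1 p.1.2.2)
  have hfactor : Function.FactorsThrough (fun p : Good => f p.1.2.1) encode := by
    intro ⟨⟨x, y, I⟩, hx, hy, hI⟩ ⟨⟨x', y', I'⟩, _, hy', _⟩ h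
    obtain ⟨rfl, h⟩ := Prod.mk.inj h
    exact apply_eq_of_code_eq f marker hinv
      (labelSet_marker_infinite hx (not_bddAbove_of_lowerDensity_pos hI)) hy hy' h
  exact ⟨fun x w => Function.extend encode (fun p : Good => f p.1.2.1) (fun _ _ => false) (x, w),
    fun x y I hx hy hI => hfactor.extend_apply _ ⟨(x, y, I), hx, hy, hI⟩⟩
end
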